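/- arXiv:2602.07563 — 7 statements merged into one kernel-verified Lean document; each statement's English description precedes it below -/
import Mathlib

section
/- For every positive integer n, the double sum ∑_{i,j≥0, i+j<n} 1/((n-i)(n-j)) equals the single sum ∑_{i=1}^{n} 1/i². -/
open Finset

/-- Reflected harmonic sum. -/
lemma harm_reflect (n : ℕ) :
    ∑ i ∈ range n, (1 : ℝ) / ((n : ℝ) - i) = ∑ i ∈ range n, (1 : ℝ) / ((i : ℝ) + 1) := by
  rw [← Finset.sum_range_reflect]
  refine Finset.sum_congr rfl fun i hi => ?_
  rw [Finset.mem_range] at hi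
  have h1 : n - 1 - i = n - (i + 1) := by omega
  have h2 : ((n - (i + 1) : ℕ) : ℝ) = (n : ℝ) - (i + 1) := by
    have : i + 1 ≤ n := hi
    push_cast [Nat.cast_sub this]
    ring
  rw [h1, h2]
  ring_nf

lemma key (n : ℕ) :
    (∑ i ∈ range n, ∑ j ∈ range n,
      if n ≤ i + j + 1 then (1 : ℝ) / (((i : ℝ) + 1) * ((j : ℝ) + 1)) else 0)
      = ∑ i ∈ Finset.Icc 1 n, (1 : ℝ) / (i : ℝ) ^ 2 := by
  induction n with
  | zero => simp
  | succ n ih =>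
    have Hn := harm_reflect n
    set H : ℝ := ∑ i ∈ range n, (1 : ℝ) / ((i : ℝ) + 1) with hH
    have hsplit : (∑ i ∈ range (n+1), ∑ j ∈ range (n+1),
        if n + 1 ≤ i + j + 1 then (1 : ℝ) / (((i : ℝ) + 1) * ((j : ℝ) + 1)) else 0)
        = (∑ i ∈ range n, ∑ j ∈ range n,
            if n ≤ i + j then (1 : ℝ) / (((i : ℝ) + 1) * ((j : ℝ) + 1)) else 0)
          + (1 / ((n : ℝ) + 1)) * H + (1 / ((n : ℝ) + 1)) * H + 1 / (((n : ℝ) + 1) * ((n : ℝ) + 1)) := by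
      rw [Finset.sum_range_succ]
      have hrow : (∑ j ∈ range (n+1),
          if n + 1 ≤ n + j + 1 then (1 : ℝ) / (((n : ℝ) + 1) * ((j : ℝ) + 1)) else 0)
          = (1 / ((n : ℝ) + 1)) * H + 1 / (((n : ℝ) + 1) * ((n : ℝ) + 1)) := by
        have htriv : ∀ j ∈ range (n+1), (if n + 1 ≤ n + j + 1 then (1 : ℝ) / (((n : ℝ) + 1) * ((j : ℝ) + 1)) else 0) = (1 : ℝ) / (((n : ℝ) + 1) * ((j : ℝ) + 1)) := fun j _ => if_pos (by omega)
        rw [Finset.sum_congr rfl htriv, Finset.sum_range_succ, hH, Finset.mul_sum]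
        congr 1
        refine Finset.sum_congr rfl fun j hj => ?_
        rw [one_div, mul_inv]
        ring
      have hcols : ∀ i ∈ range n, (∑ j ∈ range (n+1),
          if n + 1 ≤ i + j + 1 then (1 : ℝ) / (((i : ℝ) + 1) * ((j : ℝ) + 1)) else 0)
          = (∑ j ∈ range n, if n ≤ i + j then (1 : ℝ) / (((i : ℝ) + 1) * ((j : ℝ) + 1)) else 0)
            + (1 : ℝ) / (((i : ℝ) + 1) * ((n : ℝ) + 1)) := by
        intro i hi
        rw [Finset.sum_range_succ]
        congr 1
        · refine Finset.sum_congr rfl fun j hj => ?_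
          congr 1
          simp only [eq_iff_iff]
          omega
        · rw [if_pos (by omega)]
      rw [Finset.sum_congr rfl hcols, Finset.sum_add_distrib, hrow]
      have : (∑ i ∈ range n, (1 : ℝ) / (((i : ℝ) + 1) * ((n : ℝ) + 1)))
          = (1 / ((n : ℝ) + 1)) * H := by
        rw [hH, Finset.mul_sum]
        refine Finset.sum_congr rfl fun i hi => ?_
        rw [one_div, one_div, mul_inv]
        ring
      rw [this]
      ring
    have hdiag : (∑ i ∈ range n, ∑ j ∈ range n,
        if n ≤ i + j then (1 : ℝ) / (((i : ℝ) + 1) * ((j : ℝ) + 1)) else 0)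
        = (∑ i ∈ range n, ∑ j ∈ range n,
            if n ≤ i + j + 1 then (1 : ℝ) / (((i : ℝ) + 1) * ((j : ℝ) + 1)) else 0)
          - (2 / ((n : ℝ) + 1)) * H := by
      have step : ∀ i ∈ range n, ∀ j ∈ range n,
          (if n ≤ i + j then (1 : ℝ) / (((i : ℝ) + 1) * ((j : ℝ) + 1)) else 0)
          = (if n ≤ i + j + 1 then (1 : ℝ) / (((i : ℝ) + 1) * ((j : ℝ) + 1)) else 0)
            - (if j = n - 1 - i then (1 : ℝ) / (((i : ℝ) + 1) * ((j : ℝ) + 1)) else 0) := by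
        intro i hi j hj
        rw [Finset.mem_range] at hi hj
        by_cases h1 : n ≤ i + j
        · rw [if_pos h1, if_pos (by omega), if_neg (by omega)]; ring
        · by_cases h2 : n ≤ i + j + 1
          · rw [if_neg h1, if_pos h2, if_pos (by omega)]; ring
          · rw [if_neg h1, if_neg h2, if_neg (by omega)]; ring
      calc (∑ i ∈ range n, ∑ j ∈ range n,
          if n ≤ i + j then (1 : ℝ) / (((i : ℝ) + 1) * ((j : ℝ) + 1)) else 0)
          = ∑ i ∈ range n, ((∑ j ∈ range n,
              if n ≤ i + j + 1 then (1 : ℝ) / (((i : ℝ) + 1) * ((j : ℝ) + 1)) else 0)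
            - ∑ j ∈ range n,
              if j = n - 1 - i then (1 : ℝ) / (((i : ℝ) + 1) * ((j : ℝ) + 1)) else 0) := by
            refine Finset.sum_congr rfl fun i hi => ?_
            rw [← Finset.sum_sub_distrib]
            exact Finset.sum_congr rfl fun j hj => step i hi j hj
        _ = (∑ i ∈ range n, ∑ j ∈ range n,
              if n ≤ i + j + 1 then (1 : ℝ) / (((i : ℝ) + 1) * ((j : ℝ) + 1)) else 0)
            - ∑ i ∈ range n, (1 : ℝ) / (((i : ℝ) + 1) * (((n - 1 - i : ℕ) : ℝ) + 1)) := by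
            rw [Finset.sum_sub_distrib]
            congr 1
            refine Finset.sum_congr rfl fun i hi => ?_
            rw [Finset.mem_range] at hi
            rw [Finset.sum_ite_eq' (range n) (n - 1 - i)
              (fun j => (1 : ℝ) / (((i : ℝ) + 1) * ((j : ℝ) + 1))),
              if_pos (Finset.mem_range.mpr (by omega))]
        _ = (∑ i ∈ range n, ∑ j ∈ range n,
              if n ≤ i + j + 1 then (1 : ℝ) / (((i : ℝ) + 1) * ((j : ℝ) + 1)) else 0)
            - (2 / ((n : ℝ) + 1)) * H := by
            congr 1
            have : (∑ i ∈ range n, (1 : ℝ) / (((i : ℝ) + 1) * (((n - 1 - i : ℕ) : ℝ) + 1)))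
                = ∑ i ∈ range n, ((1 / ((n : ℝ) + 1)) * (1 / ((i : ℝ) + 1))
                    + (1 / ((n : ℝ) + 1)) * (1 / ((n : ℝ) - i))) := by
              refine Finset.sum_congr rfl fun i hi => ?_
              rw [Finset.mem_range] at hi
              have hc : (((n - 1 - i : ℕ) : ℝ)) = (n : ℝ) - 1 - i := by
                have : (1 + i) ≤ n := by omega
                have h' : n - 1 - i = n - (1 + i) := by omega
                rw [h', Nat.cast_sub this]
                push_cast; ring
              rw [hc]
              have h1 : ((i : ℝ) + 1) ≠ 0 := by positivity
              have h2 : ((n : ℝ) - i) ≠ 0 := by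
                have : (i : ℝ) < n := by exact_mod_cast hi
                linarith
              have h3 : ((n : ℝ) + 1) ≠ 0 := by positivity
              have h4 : (n : ℝ) - 1 - i + 1 = (n : ℝ) - i := by ring
              rw [h4]
              field_simp
              ring
            rw [this, Finset.sum_add_distrib, ← Finset.mul_sum, ← Finset.mul_sum]
            have : (∑ i ∈ range n, (1 : ℝ) / ((n : ℝ) - i)) = H := Hn
            rw [this, hH]
            ring
    rw [hsplit, hdiag, ih]
    have hins : Finset.Icc 1 (n + 1) = insert (n + 1) (Finset.Icc 1 n) := by
      ext x; simp; omega
    rw [hins, Finset.sum_insert (by simp)]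
    push_cast
    ring

/-- The Coppersmith–Sorkin double sum with `k = m = n` equals Parisi's single sum. -/
theorem parisi_double_sum (n : ℕ) (hn : 0 < n) :
    (∑ i ∈ Finset.range n, ∑ j ∈ Finset.range (n - i),
      (1 : ℝ) / ((n - i) * (n - j))) = ∑ i ∈ Finset.Icc 1 n, (1 : ℝ) / (i : ℝ) ^ 2 := by
  rw [← key n]
  -- extend inner sums to range n with an if condition
  have h1 : (∑ i ∈ Finset.range n, ∑ j ∈ Finset.range (n - i),
      (1 : ℝ) / (((n : ℝ) - i) * ((n : ℝ) - j)))
      = ∑ i ∈ range n, ∑ j ∈ range n,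
        if i + j < n then (1 : ℝ) / (((n : ℝ) - i) * ((n : ℝ) - j)) else 0 := by
    refine Finset.sum_congr rfl fun i hi => ?_
    have hset : Finset.range (n - i) = (Finset.range n).filter (fun j => i + j < n) := by
      ext j; simp [Finset.mem_filter]; omega
    rw [hset, Finset.sum_filter]
  rw [h1, ← Finset.sum_range_reflect]
  refine Finset.sum_congr rfl fun i hi => ?_
  rw [Finset.mem_range] at hi
  rw [← Finset.sum_range_reflect]
  refine Finset.sum_congr rfl fun j hj => ?_
  rw [Finset.mem_range] at hj
  have hci : (((n - 1 - i : ℕ) : ℝ)) = (n : ℝ) - 1 - i := by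
    have h' : n - 1 - i = n - (1 + i) := by omega
    rw [h', Nat.cast_sub (by omega)]; push_cast; ring
  have hcj : (((n - 1 - j : ℕ) : ℝ)) = (n : ℝ) - 1 - j := by
    have h' : n - 1 - j = n - (1 + j) := by omega
    rw [h', Nat.cast_sub (by omega)]; push_cast; ring
  have hcond : ((n - 1 - i) + (n - 1 - j) < n) ↔ (n ≤ i + j + 1) := by omega
  by_cases h : n ≤ i + j + 1
  · rw [if_pos (hcond.mpr h), if_pos h, hci, hcj]
    congr 1
    ring
  · rw [if_neg (fun hc => h (hcond.mp hc)), if_neg h]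
end

section
/- The function f(x) = (9x⁴/4 + 12x³ − 15x² + 36x − 36)e^{-3x} + 36e^{-4x} is nonnegative for all x ≥ 0 and satisfies ∫_0^∞ f(x) dx = 1. -/
/-!
Nonnegativity: `f x = exp (-3x) * (p x + 36 exp (-x))` with `p` the quartic factor, and the
alternating Taylor bound `exp (-x) ≥ 1 - x + x²/2 - x³/6` (for `x ≥ 0`) cancels the terms of `p`
of degree at most one, leaving `9x⁴/4 + 6x³ + 3x² ≥ 0`.

Normalization: `f` is a combination of the Gamma integrals `∫₀^∞ xⁿ e^{-bx} dx = n!/b^{n+1}`,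
which gives `2/9 + 8/9 - 10/9 + 4 - 12 + 9 = 1`.
-/

open Real MeasureTheory Set

lemma le_of_hasDerivAt_nonneg {g g' : ℝ → ℝ} (hg : ∀ x, HasDerivAt g (g' x) x) {a : ℝ}
    (hg' : ∀ x, a < x → 0 ≤ g' x) {x : ℝ} (hx : a ≤ x) : g a ≤ g x :=
  monotoneOn_of_hasDerivWithinAt_nonneg (convex_Ici a)
    (fun y _ => (hg y).continuousAt.continuousWithinAt) (fun y _ => (hg y).hasDerivWithinAt)
    (by simpa using hg') self_mem_Ici hx hx

lemma exp_neg_le_quadratic_of_nonneg {x : ℝ} (hx : 0 ≤ x) : exp (-x) ≤ 1 - x + x ^ 2 / 2 := by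
  have hderiv (y : ℝ) :
      HasDerivAt (fun y => 1 - y + y ^ 2 / 2 - exp (-y)) (y - 1 + exp (-y)) y := by
    refine ((((hasDerivAt_id y).const_sub 1).add ((hasDerivAt_pow 2 y).div_const 2)).sub
      (hasDerivAt_neg y).exp).congr_deriv ?_
    norm_num
    ring
  have := le_of_hasDerivAt_nonneg hderiv (fun y _ => by linarith [one_sub_le_exp_neg y]) hx
  norm_num at this
  linarith

lemma cubic_le_exp_neg_of_nonneg {x : ℝ} (hx : 0 ≤ x) :
    1 - x + x ^ 2 / 2 - x ^ 3 / 6 ≤ exp (-x) := by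
  have hderiv (y : ℝ) : HasDerivAt (fun y => exp (-y) - (1 - y + y ^ 2 / 2 - y ^ 3 / 6))
      (1 - y + y ^ 2 / 2 - exp (-y)) y := by
    refine ((hasDerivAt_neg y).exp.sub ((((hasDerivAt_id y).const_sub 1).add
      ((hasDerivAt_pow 2 y).div_const 2)).sub ((hasDerivAt_pow 3 y).div_const 6))).congr_deriv ?_
    norm_num
    ring
  have := le_of_hasDerivAt_nonneg hderiv
    (fun y hy => by linarith [exp_neg_le_quadratic_of_nonneg hy.le]) hx
  norm_num at this
  linarith

lemma integrableOn_pow_mul_exp_neg_mul (n : ℕ) {b : ℝ} (hb : 0 < b) :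
    IntegrableOn (fun x : ℝ => x ^ n * exp (-b * x)) (Ioi 0) := by
  refine (integrableOn_rpow_mul_exp_neg_mul_rpow (p := 1) (s := n)
    (by linarith [n.cast_nonneg (α := ℝ)]) one_pos hb).congr_fun (fun x _ => ?_) measurableSet_Ioi
  simp [rpow_natCast]

lemma integral_pow_mul_exp_neg_mul (n : ℕ) {b : ℝ} (hb : 0 < b) :
    ∫ x in Ioi (0 : ℝ), x ^ n * exp (-b * x) = n.factorial / b ^ (n + 1) := by
  have h := integral_rpow_mul_exp_neg_mul_Ioi (a := n + 1) (by positivity) hb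
  rw [Gamma_nat_eq_factorial, ← Nat.cast_succ, rpow_natCast] at h
  rw [← setIntegral_congr_fun measurableSet_Ioi (fun x (hx : 0 < x) => ?_)] at h
  · rw [h, div_pow, one_pow, div_mul_eq_mul_div, one_mul]
  · simp [rpow_natCast]

lemma integral_sum_mul_pow_mul_exp_neg_mul {ι : Type*} (s : Finset ι) (c b : ι → ℝ) (k : ι → ℕ)
    (hb : ∀ i ∈ s, 0 < b i) :
    ∫ x in Ioi (0 : ℝ), ∑ i ∈ s, c i * (x ^ k i * exp (-b i * x)) =
      ∑ i ∈ s, c i * (k i).factorial / b i ^ (k i + 1) := by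
  rw [integral_finsetSum _ fun i hi =>
    (integrableOn_pow_mul_exp_neg_mul (k i) (hb i hi)).const_mul _]
  refine Finset.sum_congr rfl fun i hi => ?_
  rw [integral_const_mul, integral_pow_mul_exp_neg_mul _ (hb i hi), mul_div_assoc]

/-- The density function of the minimum cost `C_{3,3,3}` of a perfect matching on `K_{3,3}`
is nonnegative on `[0,∞)` and integrates to 1. -/
theorem density_C333_nonneg_and_integrates_to_one
    (f : ℝ → ℝ)
    (hf : f = fun x => (9 * x ^ 4 / 4 + 12 * x ^ 3 - 15 * x ^ 2 + 36 * x - 36) * exp (-3 * x)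
      + 36 * exp (-4 * x)) :
    (∀ x : ℝ, 0 ≤ x → 0 ≤ f x) ∧ ∫ x in Set.Ioi (0 : ℝ), f x = 1 := by
  subst hf
  refine ⟨fun x hx => ?_, ?_⟩
  · have hbracket :
        0 ≤ 9 * x ^ 4 / 4 + 12 * x ^ 3 - 15 * x ^ 2 + 36 * x - 36 + 36 * exp (-x) := by
      nlinarith [cubic_le_exp_neg_of_nonneg hx]
    have hsplit : exp (-4 * x) = exp (-3 * x) * exp (-x) := by rw [← exp_add]; ring_nf
    calc 0 ≤ exp (-3 * x) *
          (9 * x ^ 4 / 4 + 12 * x ^ 3 - 15 * x ^ 2 + 36 * x - 36 + 36 * exp (-x)) :=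
        mul_nonneg (exp_pos _).le hbracket
      _ = _ := by simp only [hsplit]; ring
  · have hexpand (x : ℝ) :
        (9 * x ^ 4 / 4 + 12 * x ^ 3 - 15 * x ^ 2 + 36 * x - 36) * exp (-3 * x)
          + 36 * exp (-4 * x) = ∑ i : Fin 6, ![9 / 4, 12, -15, 36, -36, 36] i *
            (x ^ ![4, 3, 2, 1, 0, 0] i * exp (-![3, 3, 3, 3, 3, 4] i * x)) := by
      simp only [Fin.sum_univ_six, Matrix.cons_val]
      ring
    simp_rw [hexpand]
    rw [integral_sum_mul_pow_mul_exp_neg_mul _ _ _ _ fun i _ => by fin_cases i <;> norm_num]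
    norm_num [Fin.sum_univ_succ, Nat.factorial]
end

section
/- Let F be a rational function with F(0) = 1 that is the moment generating function of a real random variable, with all zeros and poles nonzero. If some zero ρ of F satisfies |ρ| < |ξ| for every pole ξ, then there exist infinitely many positive integers p for which the p-th cumulant κ_p (defined by κ_p = p!·[t^p] log F(t)) is negative. -/
/-!
Near `0` the cumulant generating function is `Re (∑ᵢ log (1 - t/ρᵢ) - ∑ⱼ log (1 - t/ξⱼ))`, so
`κₙ₊₁ = n! (∑ⱼ Re ξⱼ^-(n+1) - ∑ᵢ Re ρᵢ^-(n+1))`. Recurrence in the compact group `(S¹)ʳ` gives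
infinitely many `p` for which every `(‖ρᵢ‖ / ρᵢ)^p` lies within `1/2` of `1`; then every
`Re ρᵢ^-p` is positive and the one of the zero of minimal modulus `m` is at least `m^-p / 2`,
whereas `∑ⱼ ‖ξⱼ‖^-p = o(m^-p)` because all poles are farther from the origin than `m`.
-/

open MeasureTheory ProbabilityTheory Filter Topology Finset
open scoped Nat

theorem frequently_pow_mem_nhds_one {G : Type*} [Group G] [TopologicalSpace G]
    [IsTopologicalGroup G] [SeqCompactSpace G] (g : G) {U : Set G} (hU : U ∈ 𝓝 1) :
    ∃ᶠ n in atTop, g ^ n ∈ U := by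
  obtain ⟨a, -, ψ, hψ, hlim : Tendsto (fun n => g ^ ψ n) atTop (𝓝 a)⟩ :=
    isSeqCompact_univ (x := fun n => g ^ n) fun _ => trivial
  have hdouble : Tendsto (fun n => g ^ ψ (n + n)) atTop (𝓝 a) :=
    hlim.comp (tendsto_atTop_mono (fun n => Nat.le_add_left n n) tendsto_id)
  have hdiff : Tendsto (fun n => g ^ (ψ (n + n) - ψ n)) atTop (𝓝 1) := by
    have := hdouble.mul hlim.inv
    rw [mul_inv_cancel] at this
    refine this.congr fun n => ?_
    rw [pow_sub g (hψ.monotone (Nat.le_add_right _ _))]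
  have hgrow : Tendsto (fun n => ψ (n + n) - ψ n) atTop atTop :=
    tendsto_atTop_mono (fun n => Nat.le_sub_of_add_le (hψ.add_le_nat n n)) tendsto_id
  exact hgrow.frequently (hdiff.eventually hU).frequently

theorem iteratedDeriv_eventuallyEq_of_hasDerivAt {𝕜 F : Type*} [NontriviallyNormedField 𝕜]
    [NormedAddCommGroup F] [NormedSpace 𝕜 F] {f : 𝕜 → F} {H : ℕ → 𝕜 → F} {x : 𝕜}
    (hf : f =ᶠ[𝓝 x] H 0) (hH : ∀ᶠ y in 𝓝 x, ∀ n, HasDerivAt (H n) (H (n + 1) y) y) (n : ℕ) :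
    iteratedDeriv n f =ᶠ[𝓝 x] H n := by
  induction n with
  | zero => simpa using hf
  | succ n ih =>
    filter_upwards [ih.eventuallyEq_nhds, hH] with y hy hHy
    rw [iteratedDeriv_succ, hy.deriv_eq, (hHy n).deriv]

namespace Complex

theorem frequently_forall_norm_pow_sub_one_lt {ι : Type*} [Finite ι] {v : ι → ℂ}
    (hv : ∀ i, ‖v i‖ = 1) {ε : ℝ} (hε : 0 < ε) :
    ∃ᶠ n in atTop, ∀ i, ‖v i ^ n - 1‖ < ε := by
  let g : ι → Circle := fun i => ⟨v i, mem_sphere_zero_iff_norm.2 (hv i)⟩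
  have hU : {x : ι → Circle | ∀ i, ‖(x i : ℂ) - 1‖ < ε} ∈ 𝓝 1 := by
    refine IsOpen.mem_nhds ?_ (by simpa using fun _ => hε)
    simp only [Set.ofPred_forall]
    exact isOpen_iInter_of_finite fun i => isOpen_lt (by fun_prop) continuous_const
  exact frequently_pow_mem_nhds_one g hU

theorem one_sub_norm_sub_one_le_re (w : ℂ) : 1 - ‖w - 1‖ ≤ w.re := by
  have := re_le_norm (1 - w)
  rw [norm_sub_rev] at this
  simp only [sub_re, one_re] at this
  linarith

theorem re_inv_pow_eq (z : ℂ) (hz : z ≠ 0) (p : ℕ) :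
    ((z ^ p)⁻¹).re = (‖z‖ ^ p)⁻¹ * ((‖z‖ / z) ^ p).re := by
  have hnorm : (‖z‖ : ℂ) ≠ 0 := ofReal_ne_zero.2 (norm_ne_zero_iff.2 hz)
  rw [← re_ofReal_mul, div_pow, ofReal_inv, ofReal_pow, mul_div_assoc',
    inv_mul_cancel₀ (pow_ne_zero _ hnorm), one_div]

theorem frequently_sum_re_inv_pow_lt {ι κ : Type*} [Fintype ι] [Fintype κ] {ρ : ι → ℂ}
    {ξ : κ → ℂ} (hρ : ∀ i, ρ i ≠ 0) {i₀ : ι} (hi₀ : ∀ j, ‖ρ i₀‖ < ‖ξ j‖) :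
    ∃ᶠ p in atTop, ∑ j, ((ξ j ^ p)⁻¹).re < ∑ i, ((ρ i ^ p)⁻¹).re := by
  set m := ‖ρ i₀‖
  have hm : 0 < m := norm_pos_iff.2 (hρ i₀)
  have htail : ∀ᶠ p in atTop, ∑ j, (m / ‖ξ j‖) ^ p < 1 / 2 := by
    have : Tendsto (fun p => ∑ j, (m / ‖ξ j‖) ^ p) atTop (𝓝 0) := by
      simpa using tendsto_finsetSum univ fun j _ => tendsto_pow_atTop_nhds_zero_of_lt_one
        (div_nonneg hm.le (norm_nonneg _)) ((div_lt_one (hm.trans (hi₀ j))).2 (hi₀ j))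
    exact this.eventually (eventually_lt_nhds one_half_pos)
  have hrot : ∃ᶠ p in atTop, ∀ i, ‖(‖ρ i‖ / ρ i : ℂ) ^ p - 1‖ < 1 / 2 :=
    frequently_forall_norm_pow_sub_one_lt (fun i => by simp [hρ i]) one_half_pos
  refine (hrot.and_eventually htail).mono fun p ⟨hp, htail⟩ => ?_
  have hρ_re (i : ι) : (‖ρ i‖ ^ p)⁻¹ / 2 ≤ ((ρ i ^ p)⁻¹).re := by
    rw [re_inv_pow_eq _ (hρ i)]
    have := one_sub_norm_sub_one_le_re ((‖ρ i‖ / ρ i : ℂ) ^ p)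
    have := hp i
    rw [div_eq_mul_one_div]
    gcongr
    linarith
  calc ∑ j, ((ξ j ^ p)⁻¹).re ≤ ∑ j, (m ^ p)⁻¹ * (m / ‖ξ j‖) ^ p := by
        refine sum_le_sum fun j _ => (re_le_norm _).trans_eq ?_
        rw [norm_inv, norm_pow, div_pow, mul_div, inv_mul_cancel₀ (pow_pos hm p).ne', one_div]
    _ = (m ^ p)⁻¹ * ∑ j, (m / ‖ξ j‖) ^ p := (mul_sum ..).symm
    _ < (m ^ p)⁻¹ / 2 := by
        rw [div_eq_mul_one_div]
        exact mul_lt_mul_of_pos_left htail (by positivity)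
    _ ≤ ((ρ i₀ ^ p)⁻¹).re := hρ_re i₀
    _ ≤ ∑ i, ((ρ i ^ p)⁻¹).re :=
        single_le_sum (fun i _ => (by positivity : (0:ℝ) ≤ _).trans (hρ_re i)) (mem_univ i₀)

noncomputable def iteratedDerivLogOneSubDiv (a : ℂ) : ℕ → ℂ → ℂ
  | 0, z => log (1 - z / a)
  | n + 1, z => -n ! * ((a - z) ^ (n + 1))⁻¹

theorem hasDerivAt_iteratedDerivLogOneSubDiv {a z : ℂ} (ha : a ≠ 0)
    (hz : 1 - z / a ∈ slitPlane) (n : ℕ) :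
    HasDerivAt (iteratedDerivLogOneSubDiv a n) (iteratedDerivLogOneSubDiv a (n + 1) z) z := by
  have hza : a - z ≠ 0 := by
    refine sub_ne_zero.2 fun h => slitPlane_ne_zero hz ?_
    rw [← h, div_self ha, sub_self]
  cases n with
  | zero =>
    have := (hasDerivAt_log hz).comp z (((hasDerivAt_id z).div_const a).const_sub 1)
    refine this.congr_deriv ?_
    simp only [iteratedDerivLogOneSubDiv]
    field_simp
    ring
  | succ n =>
    have hlin : HasDerivAt (fun w => a - w) (-1) z := (hasDerivAt_id z).const_sub a
    have := ((hlin.fun_pow (n + 1)).fun_inv (pow_ne_zero _ hza)).const_mul (-(n ! : ℂ))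
    refine this.congr_deriv ?_
    simp only [iteratedDerivLogOneSubDiv, Nat.factorial_succ]
    push_cast
    field_simp
    ring

theorem eventually_one_sub_div_mem_slitPlane (a : ℂ) :
    ∀ᶠ t : ℝ in 𝓝 0, 1 - (t : ℂ) / a ∈ slitPlane :=
  (by fun_prop : Continuous fun t : ℝ => 1 - (t : ℂ) / a).continuousAt.eventually_mem
    (isOpen_slitPlane.mem_nhds (by simp))

theorem iteratedDeriv_succ_re_sum_log_one_sub_div {ι κ : Type*} [Fintype ι] [Fintype κ]
    {ρ : ι → ℂ} {ξ : κ → ℂ} (hρ : ∀ i, ρ i ≠ 0) (hξ : ∀ j, ξ j ≠ 0) {f : ℝ → ℝ}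
    (hf : f =ᶠ[𝓝 0] fun t => (∑ i, log (1 - t / ρ i) - ∑ j, log (1 - t / ξ j)).re) (n : ℕ) :
    iteratedDeriv (n + 1) f 0 =
      n ! * (∑ j, ((ξ j ^ (n + 1))⁻¹).re - ∑ i, ((ρ i ^ (n + 1))⁻¹).re) := by
  set H : ℕ → ℝ → ℝ := fun n t =>
    (∑ i, iteratedDerivLogOneSubDiv (ρ i) n t - ∑ j, iteratedDerivLogOneSubDiv (ξ j) n t).re
  have hH : ∀ᶠ t in 𝓝 0, ∀ n, HasDerivAt (H n) (H (n + 1) t) t := by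
    filter_upwards [eventually_all.2 fun i => eventually_one_sub_div_mem_slitPlane (ρ i),
      eventually_all.2 fun j => eventually_one_sub_div_mem_slitPlane (ξ j)] with t hρt hξt n
    have hsum := (HasDerivAt.fun_sum (u := univ) fun i _ =>
        hasDerivAt_iteratedDerivLogOneSubDiv (hρ i) (hρt i) n).sub
      (HasDerivAt.fun_sum (u := univ) fun j _ =>
        hasDerivAt_iteratedDerivLogOneSubDiv (hξ j) (hξt j) n)
    exact (reCLM.hasFDerivAt.comp_hasDerivAt t hsum.comp_ofReal :)
  rw [(iteratedDeriv_eventuallyEq_of_hasDerivAt hf hH (n + 1)).eq_of_nhds]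
  simp only [H, iteratedDerivLogOneSubDiv, ofReal_zero, sub_zero]
  rw [← mul_sum, ← mul_sum, ← mul_sub_left_distrib, neg_mul, ← mul_neg, neg_sub, ← ofReal_natCast,
    re_ofReal_mul, sub_re, re_sum, re_sum]

theorem log_eq_re_sum_log_sub_sum_log {ι κ : Type*} [Fintype ι] [Fintype κ] {x : ℝ}
    {a : ι → ℂ} {b : κ → ℂ} (ha : ∀ i, a i ≠ 0) (h : x * ∏ j, b j = ∏ i, a i) :
    Real.log x = (∑ i, log (a i) - ∑ j, log (b j)).re := by
  have hprod : (x : ℂ) * ∏ j, b j ≠ 0 := h ▸ prod_ne_zero_iff.2 fun i _ => ha i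
  have hx : x ≠ 0 := by exact_mod_cast left_ne_zero_of_mul hprod
  have hb : ∏ j, b j ≠ 0 := right_ne_zero_of_mul hprod
  simp only [sub_re, re_sum, log_re]
  rw [← Real.log_prod fun i _ => norm_ne_zero_iff.2 (ha i),
    ← Real.log_prod fun j _ => norm_ne_zero_iff.2 (prod_ne_zero_iff.1 hb j (mem_univ j)),
    ← norm_prod, ← norm_prod, ← h, norm_mul, norm_real, Real.norm_eq_abs,
    Real.log_mul (abs_ne_zero.2 hx) (norm_ne_zero_iff.2 hb), Real.log_abs]
  ring

end Complex

open Complex in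
theorem ProbabilityTheory.cgf_eventuallyEq_re_sum_log_sub_sum_log {Ω : Type*}
    [MeasurableSpace Ω] {μ : Measure Ω} {X : Ω → ℝ} {ι κ : Type*} [Fintype ι] [Fintype κ]
    {ρ : ι → ℂ} {ξ : κ → ℂ}
    (hF : ∀ᶠ t in 𝓝 (0 : ℝ),
      (mgf X μ t : ℂ) * ∏ j, (1 - (t : ℂ) / ξ j) = ∏ i, (1 - (t : ℂ) / ρ i)) :
    cgf X μ =ᶠ[𝓝 0] fun t => (∑ i, log (1 - t / ρ i) - ∑ j, log (1 - t / ξ j)).re := by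
  filter_upwards [hF, eventually_all.2 fun i => eventually_one_sub_div_mem_slitPlane (ρ i)]
    with t hFt hρt
  exact log_eq_re_sum_log_sub_sum_log (fun i => slitPlane_ne_zero (hρt i)) hFt

theorem infinitely_many_negative_cumulants_general
    {Ω : Type*} [MeasurableSpace Ω] {μ : Measure Ω}
    (X : Ω → ℝ)
    (r s : ℕ) (ρ : Fin r → ℂ) (ξ : Fin s → ℂ)
    (hρ : ∀ i, ρ i ≠ 0)
    (hF : ∀ᶠ t in nhds (0 : ℝ),
      (mgf X μ t : ℂ) * ∏ j, (1 - (t : ℂ) / ξ j) = ∏ i, (1 - (t : ℂ) / ρ i))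
    (hzero : ∃ i, ∀ j, ‖ρ i‖ < ‖ξ j‖) :
    {p : ℕ | 1 ≤ p ∧ iteratedDeriv p (cgf X μ) 0 < 0}.Infinite := by
  obtain ⟨i₀, hi₀⟩ := hzero
  have hξ (j : Fin s) : ξ j ≠ 0 := norm_pos_iff.1 ((norm_nonneg _).trans_lt (hi₀ j))
  have hκ := Complex.iteratedDeriv_succ_re_sum_log_one_sub_div hρ hξ
    (cgf_eventuallyEq_re_sum_log_sub_sum_log hF)
  refine Nat.frequently_atTop_iff_infinite.1 <|
    ((Complex.frequently_sum_re_inv_pow_lt hρ hi₀).and_eventually (eventually_ge_atTop 1)).mono ?_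
  rintro _ ⟨hlt, hp⟩
  obtain ⟨n, rfl⟩ := Nat.exists_eq_add_of_le' hp
  rw [hκ n]
  exact ⟨hp, mul_neg_of_pos_of_neg (by positivity) (sub_neg.2 hlt)⟩

/-- If the moment generating function of a real random variable is a rational function
`F = ∏ᵢ(1-t/ρᵢ)/∏ⱼ(1-t/ξⱼ)` (so `F(0)=1`, zeros `ρᵢ`, poles `ξⱼ`, all nonzero) and some
zero `ρ` satisfies `|ρ| < |ξ|` for every pole `ξ`, then infinitely many cumulants of the
random variable are negative. -/
theorem infinitely_many_negative_cumulants
    {Ω : Type*} [MeasurableSpace Ω] {μ : Measure Ω} [IsProbabilityMeasure μ]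
    (X : Ω → ℝ)
    (r s : ℕ) (ρ : Fin r → ℂ) (ξ : Fin s → ℂ)
    (hρ : ∀ i, ρ i ≠ 0) (hξ : ∀ j, ξ j ≠ 0)
    (hF : ∀ᶠ t in nhds (0 : ℝ),
      (mgf X μ t : ℂ) * ∏ j, (1 - (t : ℂ) / ξ j) = ∏ i, (1 - (t : ℂ) / ρ i))
    (hzero : ∃ i, ∀ j, ‖ρ i‖ < ‖ξ j‖) :
    {p : ℕ | 1 ≤ p ∧ iteratedDeriv p (cgf X μ) 0 < 0}.Infinite :=
  infinitely_many_negative_cumulants_general X r s ρ ξ hρ hF hzero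
end

section
/- Locality of bipartite matchings: in a complete bipartite graph with vertex parts A and B and nonnegative real edge costs, if M is a k-matching (a set of k pairwise vertex-disjoint edges) which does not have minimum total cost among all k-matchings, then there exists a k-matching M' of strictly smaller total cost such that at most one vertex of A and at most one vertex of B is covered by M' but not by M. -/
open Finset

namespace MatchLoc

open scoped Classical

variable {A B : Type*} [DecidableEq A] [DecidableEq B]

/-- pairwise-disjointness part of being a matching -/
def PW (M : Finset (A × B)) : Prop :=
  ∀ e ∈ M, ∀ f ∈ M, e ≠ f → e.1 ≠ f.1 ∧ e.2 ≠ f.2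

lemma PW.eq_of_fst {M : Finset (A × B)} (h : PW M) {e f : A × B}
    (he : e ∈ M) (hf : f ∈ M) (h1 : e.1 = f.1) : e = f := by
  by_contra hne; exact (h e he f hf hne).1 h1

lemma PW.eq_of_snd {M : Finset (A × B)} (h : PW M) {e f : A × B}
    (he : e ∈ M) (hf : f ∈ M) (h1 : e.2 = f.2) : e = f := by
  by_contra hne; exact (h e he f hf hne).2 h1

variable (M M' : Finset (A × B))

def DD : Finset (A × B) := (M \ M') ∪ (M' \ M)

def adj (u v : A × B) : Prop :=
  u ∈ DD M M' ∧ v ∈ DD M M' ∧ u ≠ v ∧ (u.1 = v.1 ∨ u.2 = v.2)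

def Closed (R : Finset (A × B)) : Prop :=
  R ⊆ DD M M' ∧
    ∀ e ∈ R, ∀ g ∈ DD M M', g ≠ e → (g.1 = e.1 ∨ g.2 = e.2) → g ∈ R

noncomputable def comp (e : A × B) : Finset (A × B) :=
  (DD M M').filter (fun g => Relation.ReflTransGen (adj M M') e g)

def nbr (f : A × B) : Finset (A × B) :=
  (DD M M').filter fun g => g ≠ f ∧ (g.1 = f.1 ∨ g.2 = f.2)

def degA (f : A × B) : ℕ := ((DD M M').filter fun g => g ≠ f ∧ g.1 = f.1).card
def degB (f : A × B) : ℕ := ((DD M M').filter fun g => g ≠ f ∧ g.2 = f.2).card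

def mm (R : Finset (A × B)) : ℕ := (R ∩ (M \ M')).card
def mm' (R : Finset (A × B)) : ℕ := (R ∩ (M' \ M)).card

def defA (R : Finset (A × B)) : ℕ :=
  ((R ∩ (M' \ M)).filter fun e => degA M M' e = 0).card
def defA' (R : Finset (A × B)) : ℕ :=
  ((R ∩ (M \ M')).filter fun e => degA M M' e = 0).card
def defB (R : Finset (A × B)) : ℕ :=
  ((R ∩ (M' \ M)).filter fun e => degB M M' e = 0).card
def defB' (R : Finset (A × B)) : ℕ :=
  ((R ∩ (M \ M')).filter fun e => degB M M' e = 0).card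

variable {M M'}

lemma mem_DD {e : A × B} : e ∈ DD M M' ↔ (e ∈ M ∧ e ∉ M') ∨ (e ∈ M' ∧ e ∉ M) := by
  simp [DD, mem_union, mem_sdiff]

lemma adj_symm {u v : A × B} (h : adj M M' u v) : adj M M' v u := by
  obtain ⟨h1, h2, h3, h4⟩ := h
  exact ⟨h2, h1, h3.symm, h4.imp Eq.symm Eq.symm⟩

/-- partition of a subset of DD -/
lemma subset_DD_eq_union {R : Finset (A × B)} (hR : R ⊆ DD M M') :
    R = (R ∩ (M \ M')) ∪ (R ∩ (M' \ M)) := by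
  ext e
  simp only [mem_union, mem_inter, mem_sdiff]
  constructor
  · intro he
    rcases mem_DD.1 (hR he) with h | h
    · exact Or.inl ⟨he, h⟩
    · exact Or.inr ⟨he, h⟩
  · rintro (⟨he, _⟩ | ⟨he, _⟩) <;> exact he

lemma inter_disj (R : Finset (A × B)) : Disjoint (R ∩ (M \ M')) (R ∩ (M' \ M)) := by
  rw [Finset.disjoint_left]
  intro e h1 h2
  simp only [mem_inter, mem_sdiff] at h1 h2
  exact h1.2.2 h2.2.1

lemma card_R_split {R : Finset (A × B)} (hR : R ⊆ DD M M') :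
    R.card = mm M M' R + mm' M M' R := by
  rw [mm, mm', ← card_union_of_disjoint (inter_disj R), ← subset_DD_eq_union hR]


lemma DD_comm : DD M M' = DD M' M := union_comm _ _

lemma degA_comm : degA M M' = degA M' M := by
  funext f; rw [degA, degA, DD_comm]

lemma degB_comm : degB M M' = degB M' M := by
  funext f; rw [degB, degB, DD_comm]

lemma Closed.symm {R : Finset (A × B)} (h : Closed M M' R) : Closed M' M R := by
  rw [Closed, ← DD_comm]; exact h

lemma mem_opp_fst (hM : PW M) {f g : A × B} (hf1 : f ∈ M) (hf2 : f ∉ M')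
    (hg : g ∈ DD M M') (hne : g ≠ f) (h1 : g.1 = f.1) : g ∈ M' ∧ g ∉ M := by
  rcases mem_DD.1 hg with h | h
  · exact absurd (hM.eq_of_fst h.1 hf1 h1) hne
  · exact h

lemma mem_opp_snd (hM : PW M) {f g : A × B} (hf1 : f ∈ M) (hf2 : f ∉ M')
    (hg : g ∈ DD M M') (hne : g ≠ f) (h1 : g.2 = f.2) : g ∈ M' ∧ g ∉ M := by
  rcases mem_DD.1 hg with h | h
  · exact absurd (hM.eq_of_snd h.1 hf1 h1) hne
  · exact h

lemma degA_le_one (hM : PW M) (hM' : PW M') {f : A × B} (hf : f ∈ DD M M') :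
    degA M M' f ≤ 1 := by
  rw [degA]
  apply card_le_one.2
  intro g hg g' hg'
  simp only [mem_filter] at hg hg'
  obtain ⟨hgD, hgf, hg1⟩ := hg
  obtain ⟨hg'D, hg'f, hg'1⟩ := hg'
  rcases mem_DD.1 hf with hfM | hfM
  · have h := mem_opp_fst hM hfM.1 hfM.2 hgD hgf hg1
    have h' := mem_opp_fst hM hfM.1 hfM.2 hg'D hg'f hg'1
    exact hM'.eq_of_fst h.1 h'.1 (hg1.trans hg'1.symm)
  · have h := mem_opp_fst (M := M') (M' := M) hM' hfM.1 hfM.2 (DD_comm (M := M) (M' := M') ▸ hgD) hgf hg1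
    have h' := mem_opp_fst (M := M') (M' := M) hM' hfM.1 hfM.2 (DD_comm (M := M) (M' := M') ▸ hg'D) hg'f hg'1
    exact hM.eq_of_fst h.1 h'.1 (hg1.trans hg'1.symm)

lemma degB_le_one (hM : PW M) (hM' : PW M') {f : A × B} (hf : f ∈ DD M M') :
    degB M M' f ≤ 1 := by
  rw [degB]
  apply card_le_one.2
  intro g hg g' hg'
  simp only [mem_filter] at hg hg'
  obtain ⟨hgD, hgf, hg1⟩ := hg
  obtain ⟨hg'D, hg'f, hg'1⟩ := hg'
  rcases mem_DD.1 hf with hfM | hfM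
  · have h := mem_opp_snd hM hfM.1 hfM.2 hgD hgf hg1
    have h' := mem_opp_snd hM hfM.1 hfM.2 hg'D hg'f hg'1
    exact hM'.eq_of_snd h.1 h'.1 (hg1.trans hg'1.symm)
  · have h := mem_opp_snd (M := M') (M' := M) hM' hfM.1 hfM.2 (DD_comm (M := M) (M' := M') ▸ hgD) hgf hg1
    have h' := mem_opp_snd (M := M') (M' := M) hM' hfM.1 hfM.2 (DD_comm (M := M) (M' := M') ▸ hg'D) hg'f hg'1
    exact hM.eq_of_snd h.1 h'.1 (hg1.trans hg'1.symm)

lemma image_step_fst (hM : PW M) (hM' : PW M') {R : Finset (A × B)} (hR : Closed M M' R) :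
    ((R ∩ (M' \ M)).filter fun e => ¬ degA M M' e = 0).image Prod.fst ⊆
      ((R ∩ (M \ M')).filter fun e => ¬ degA M M' e = 0).image Prod.fst := by
  intro a ha
  simp only [mem_image, mem_filter, mem_inter, mem_sdiff] at ha ⊢
  obtain ⟨e, ⟨⟨heR, heM', heM⟩, hdeg⟩, hea⟩ := ha
  have hne : ((DD M M').filter fun g => g ≠ e ∧ g.1 = e.1).Nonempty := by
    rw [← card_pos]
    exact Nat.pos_of_ne_zero hdeg
  obtain ⟨g, hg⟩ := hne
  simp only [mem_filter] at hg
  obtain ⟨hgD, hgne, hg1⟩ := hg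
  have hgM : g ∈ M ∧ g ∉ M' :=
    mem_opp_fst (M := M') (M' := M) hM' heM' heM (DD_comm (M := M) (M' := M') ▸ hgD) hgne hg1
  have hgR : g ∈ R := hR.2 e heR g hgD hgne (Or.inl hg1)
  refine ⟨g, ⟨⟨hgR, hgM.1, hgM.2⟩, ?_⟩, hg1.trans hea⟩
  intro h0
  have : e ∈ (DD M M').filter fun x => x ≠ g ∧ x.1 = g.1 := by
    simp only [mem_filter]
    exact ⟨hR.1 heR, fun h => hgne h.symm, hg1.symm⟩
  rw [degA] at h0
  exact absurd (card_eq_zero.1 h0 ▸ this) (notMem_empty e)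

lemma image_step_snd (hM : PW M) (hM' : PW M') {R : Finset (A × B)} (hR : Closed M M' R) :
    ((R ∩ (M' \ M)).filter fun e => ¬ degB M M' e = 0).image Prod.snd ⊆
      ((R ∩ (M \ M')).filter fun e => ¬ degB M M' e = 0).image Prod.snd := by
  intro a ha
  simp only [mem_image, mem_filter, mem_inter, mem_sdiff] at ha ⊢
  obtain ⟨e, ⟨⟨heR, heM', heM⟩, hdeg⟩, hea⟩ := ha
  have hne : ((DD M M').filter fun g => g ≠ e ∧ g.2 = e.2).Nonempty := by
    rw [← card_pos]
    exact Nat.pos_of_ne_zero hdeg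
  obtain ⟨g, hg⟩ := hne
  simp only [mem_filter] at hg
  obtain ⟨hgD, hgne, hg1⟩ := hg
  have hgM : g ∈ M ∧ g ∉ M' :=
    mem_opp_snd (M := M') (M' := M) hM' heM' heM (DD_comm (M := M) (M' := M') ▸ hgD) hgne hg1
  have hgR : g ∈ R := hR.2 e heR g hgD hgne (Or.inr hg1)
  refine ⟨g, ⟨⟨hgR, hgM.1, hgM.2⟩, ?_⟩, hg1.trans hea⟩
  intro h0
  have : e ∈ (DD M M').filter fun x => x ≠ g ∧ x.2 = g.2 := by
    simp only [mem_filter]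
    exact ⟨hR.1 heR, fun h => hgne h.symm, hg1.symm⟩
  rw [degB] at h0
  exact absurd (card_eq_zero.1 h0 ▸ this) (notMem_empty e)

lemma count_fst (hM : PW M) (hM' : PW M') {R : Finset (A × B)} (hR : Closed M M' R) :
    mm' M M' R + defA' M M' R = mm M M' R + defA M M' R := by
  have himg : ((R ∩ (M' \ M)).filter fun e => ¬ degA M M' e = 0).image Prod.fst =
      ((R ∩ (M \ M')).filter fun e => ¬ degA M M' e = 0).image Prod.fst := by
    apply Subset.antisymm (image_step_fst hM hM' hR)
    have := image_step_fst (M := M') (M' := M) hM' hM hR.symm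
    rw [degA_comm (M := M) (M' := M')]
    exact this
  have hcard' : ((R ∩ (M' \ M)).filter fun e => ¬ degA M M' e = 0).card =
      ((R ∩ (M \ M')).filter fun e => ¬ degA M M' e = 0).card := by
    rw [← card_image_of_injOn (f := Prod.fst), himg, card_image_of_injOn]
    · intro x hx y hy hxy
      simp only [coe_filter, mem_inter, mem_sdiff, Set.mem_setOf_eq, mem_coe] at hx hy
      exact hM.eq_of_fst hx.1.2.1 hy.1.2.1 hxy
    · intro x hx y hy hxy
      simp only [coe_filter, mem_inter, mem_sdiff, Set.mem_setOf_eq, mem_coe] at hx hy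
      exact hM'.eq_of_fst hx.1.2.1 hy.1.2.1 hxy
  have h1 := card_filter_add_card_filter_not
    (s := R ∩ (M' \ M)) (p := fun e => degA M M' e = 0)
  have h2 := card_filter_add_card_filter_not
    (s := R ∩ (M \ M')) (p := fun e => degA M M' e = 0)
  rw [mm', mm, defA', defA]
  omega

lemma count_snd (hM : PW M) (hM' : PW M') {R : Finset (A × B)} (hR : Closed M M' R) :
    mm' M M' R + defB' M M' R = mm M M' R + defB M M' R := by
  have himg : ((R ∩ (M' \ M)).filter fun e => ¬ degB M M' e = 0).image Prod.snd =
      ((R ∩ (M \ M')).filter fun e => ¬ degB M M' e = 0).image Prod.snd := by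
    apply Subset.antisymm (image_step_snd hM hM' hR)
    have := image_step_snd (M := M') (M' := M) hM' hM hR.symm
    rw [degB_comm (M := M) (M' := M')]
    exact this
  have hcard' : ((R ∩ (M' \ M)).filter fun e => ¬ degB M M' e = 0).card =
      ((R ∩ (M \ M')).filter fun e => ¬ degB M M' e = 0).card := by
    rw [← card_image_of_injOn (f := Prod.snd), himg, card_image_of_injOn]
    · intro x hx y hy hxy
      simp only [coe_filter, mem_inter, mem_sdiff, Set.mem_setOf_eq, mem_coe] at hx hy
      exact hM.eq_of_snd hx.1.2.1 hy.1.2.1 hxy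
    · intro x hx y hy hxy
      simp only [coe_filter, mem_inter, mem_sdiff, Set.mem_setOf_eq, mem_coe] at hx hy
      exact hM'.eq_of_snd hx.1.2.1 hy.1.2.1 hxy
  have h1 := card_filter_add_card_filter_not
    (s := R ∩ (M' \ M)) (p := fun e => degB M M' e = 0)
  have h2 := card_filter_add_card_filter_not
    (s := R ∩ (M \ M')) (p := fun e => degB M M' e = 0)
  rw [mm', mm, defB', defB]
  omega


variable (M M') in
def reachN (e₀ : A × B) : ℕ → (A × B) → Prop
  | 0, f => f = e₀
  | n + 1, f => ∃ g, reachN e₀ n g ∧ adj M M' g f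

lemma rtg_of_reachN {e₀ : A × B} :
    ∀ n f, reachN M M' e₀ n f → Relation.ReflTransGen (adj M M') e₀ f := by
  intro n
  induction n with
  | zero => intro f hf; rw [show f = e₀ from hf]
  | succ n ih =>
    rintro f ⟨g, hg, hadj⟩
    exact (ih g hg).tail hadj

lemma reachN_of_rtg {e₀ f : A × B} (h : Relation.ReflTransGen (adj M M') e₀ f) :
    ∃ n, reachN M M' e₀ n f := by
  induction h with
  | refl => exact ⟨0, rfl⟩
  | tail _ hadj ih =>
    obtain ⟨n, hn⟩ := ih
    exact ⟨n + 1, _, hn, hadj⟩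

lemma mem_comp {e g : A × B} :
    g ∈ comp M M' e ↔ g ∈ DD M M' ∧ Relation.ReflTransGen (adj M M') e g := mem_filter

lemma self_mem_comp {e : A × B} (he : e ∈ DD M M') : e ∈ comp M M' e :=
  mem_comp.2 ⟨he, Relation.ReflTransGen.refl⟩

lemma comp_subset_DD {e : A × B} : comp M M' e ⊆ DD M M' := filter_subset _ _

lemma comp_closed (e : A × B) : Closed M M' (comp M M' e) := by
  refine ⟨comp_subset_DD, fun f hf g hg hne hsh => ?_⟩
  have hf' := mem_comp.1 hf
  exact mem_comp.2 ⟨hg, hf'.2.tail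
    ⟨hf'.1, hg, fun h => hne h.symm, hsh.imp Eq.symm Eq.symm⟩⟩

lemma comp_subset_of_closed {S : Finset (A × B)} (hS : Closed M M' S) {e : A × B}
    (he : e ∈ S) : comp M M' e ⊆ S := by
  intro g hg
  have h := (mem_comp.1 hg).2
  clear hg
  induction h with
  | refl => exact he
  | tail _ hadj ih =>
    exact hS.2 _ ih _ hadj.2.1 (fun h => hadj.2.2.1 h.symm) (hadj.2.2.2.imp Eq.symm Eq.symm)

variable (M M') in
noncomputable def df (e₀ f : A × B) : ℕ :=
  if h : ∃ n, reachN M M' e₀ n f then Nat.find h else 0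

lemma df_spec {e₀ f : A × B} (h : ∃ n, reachN M M' e₀ n f) :
    reachN M M' e₀ (df M M' e₀ f) f := by
  rw [df, dif_pos h]; exact Nat.find_spec h

lemma df_le {e₀ f : A × B} {n : ℕ} (hn : reachN M M' e₀ n f) : df M M' e₀ f ≤ n := by
  rw [df, dif_pos ⟨n, hn⟩]; exact Nat.find_le hn

lemma exists_pred {e₀ f : A × B} (hf : f ∈ comp M M' e₀) (hne : f ≠ e₀) :
    ∃ g, adj M M' g f ∧ g ∈ comp M M' e₀ ∧ df M M' e₀ g + 1 = df M M' e₀ f := by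
  have hex : ∃ n, reachN M M' e₀ n f := reachN_of_rtg (mem_comp.1 hf).2
  have hspec := df_spec (M := M) (M' := M') hex
  have hpos : df M M' e₀ f ≠ 0 := by
    intro h0
    rw [h0] at hspec
    exact hne hspec
  obtain ⟨m, hm⟩ := Nat.exists_eq_succ_of_ne_zero hpos
  rw [hm] at hspec
  obtain ⟨g, hgm, hadj⟩ := hspec
  have hgc : g ∈ comp M M' e₀ := mem_comp.2 ⟨hadj.1, rtg_of_reachN _ _ hgm⟩
  have h1 : df M M' e₀ g ≤ m := df_le hgm
  have h2 : df M M' e₀ f ≤ df M M' e₀ g + 1 :=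
    df_le ⟨g, df_spec ⟨m, hgm⟩, hadj⟩
  exact ⟨g, hadj, hgc, by omega⟩

lemma sumdeg {e₀ : A × B} (he₀ : e₀ ∈ DD M M') :
    2 * (comp M M' e₀).card ≤ ((comp M M' e₀).sigma fun f => nbr M M' f).card + 2 := by
  set C := comp M M' e₀ with hC
  have hpred : ∀ f, ∃ g, f ∈ C.erase e₀ →
      adj M M' g f ∧ g ∈ C ∧ df M M' e₀ g + 1 = df M M' e₀ f := by
    intro f
    by_cases hf : f ∈ C.erase e₀
    · obtain ⟨g, h⟩ := exists_pred (mem_of_mem_erase hf) (ne_of_mem_erase hf)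
      exact ⟨g, fun _ => h⟩
    · exact ⟨f, fun h => absurd h hf⟩
  choose pv hpv using hpred
  set S1 := (C.erase e₀).image fun v => (⟨v, pv v⟩ : (_ : A × B) × (A × B)) with hS1
  set S2 := (C.erase e₀).image fun v => (⟨pv v, v⟩ : (_ : A × B) × (A × B)) with hS2
  have hcard1 : S1.card = (C.erase e₀).card := by
    apply card_image_of_injOn
    intro v _ w _ h
    exact congrArg Sigma.fst h
  have hcard2 : S2.card = (C.erase e₀).card := by
    apply card_image_of_injOn
    intro v _ w _ h
    exact congrArg (fun s : (_ : A × B) × (A × B) => s.2) h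
  have hdisj : Disjoint S1 S2 := by
    rw [Finset.disjoint_left]
    intro x hx1 hx2
    simp only [hS1, hS2, mem_image] at hx1 hx2
    obtain ⟨v, hv, hveq⟩ := hx1
    obtain ⟨w, hw, hweq⟩ := hx2
    rw [← hweq] at hveq
    have h1 : v = pv w := congrArg (fun s : (_ : A × B) × (A × B) => s.1) hveq
    have h2 : pv v = w := congrArg (fun s : (_ : A × B) × (A × B) => s.2) hveq
    have e1 := (hpv v hv).2.2
    have e2 := (hpv w hw).2.2
    rw [h2] at e1
    rw [← h1] at e2
    omega
  have hsub : S1 ∪ S2 ⊆ C.sigma fun f => nbr M M' f := by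
    intro x hx
    rw [mem_union] at hx
    rcases hx with hx | hx
    · simp only [hS1, mem_image] at hx
      obtain ⟨v, hv, hveq⟩ := hx
      obtain ⟨hadj, hgc, _⟩ := hpv v hv
      rw [← hveq]
      rw [mem_sigma]
      refine ⟨mem_of_mem_erase hv, ?_⟩
      rw [nbr, mem_filter]
      exact ⟨hadj.1, hadj.2.2.1, hadj.2.2.2⟩
    · simp only [hS2, mem_image] at hx
      obtain ⟨v, hv, hveq⟩ := hx
      obtain ⟨hadj, hgc, _⟩ := hpv v hv
      rw [← hveq]
      rw [mem_sigma]
      refine ⟨hgc, ?_⟩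
      rw [nbr, mem_filter]
      exact ⟨hadj.2.1, fun h => hadj.2.2.1 h.symm, hadj.2.2.2.imp Eq.symm Eq.symm⟩
  have hcu : (S1 ∪ S2).card = 2 * (C.erase e₀).card := by
    rw [card_union_of_disjoint hdisj, hcard1, hcard2]; ring
  have hle := card_le_card hsub
  have herase : (C.erase e₀).card = C.card - 1 := card_erase_of_mem (self_mem_comp he₀)
  have hpos : 0 < C.card := card_pos.2 ⟨e₀, self_mem_comp he₀⟩
  omega

lemma nbr_card_eq {f : A × B} : (nbr M M' f).card = degA M M' f + degB M M' f := by
  rw [nbr, degA, degB]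
  have : ((DD M M').filter fun g => g ≠ f ∧ (g.1 = f.1 ∨ g.2 = f.2)) =
      ((DD M M').filter fun g => g ≠ f ∧ g.1 = f.1) ∪
      ((DD M M').filter fun g => g ≠ f ∧ g.2 = f.2) := by
    rw [← filter_or]
    apply filter_congr
    intro g _
    constructor
    · rintro ⟨h1, h2 | h2⟩
      · exact Or.inl ⟨h1, h2⟩
      · exact Or.inr ⟨h1, h2⟩
    · rintro (⟨h1, h2⟩ | ⟨h1, h2⟩)
      · exact ⟨h1, Or.inl h2⟩
      · exact ⟨h1, Or.inr h2⟩
  rw [this, card_union_of_disjoint]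
  rw [Finset.disjoint_left]
  intro g h1 h2
  simp only [mem_filter] at h1 h2
  exact h1.2.1 (Prod.ext h1.2.2 h2.2.2)

lemma budget (hM : PW M) (hM' : PW M') {e₀ : A × B} (he₀ : e₀ ∈ DD M M') :
    defA M M' (comp M M' e₀) + defA' M M' (comp M M' e₀) +
      defB M M' (comp M M' e₀) + defB' M M' (comp M M' e₀) ≤ 2 := by
  set C := comp M M' e₀ with hCdef
  have hCD : C ⊆ DD M M' := comp_subset_DD
  have hA : (∑ f ∈ C, degA M M' f) + (C.filter fun f => degA M M' f = 0).card = C.card := by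
    rw [← sum_filter_add_sum_filter_not C (fun f => degA M M' f = 0) (degA M M')]
    have hz : ∑ f ∈ C.filter (fun f => degA M M' f = 0), degA M M' f = 0 := by
      apply sum_eq_zero
      intro f hf
      exact (mem_filter.1 hf).2
    have ho : ∑ f ∈ C.filter (fun f => ¬ degA M M' f = 0), degA M M' f =
        (C.filter fun f => ¬ degA M M' f = 0).card := by
      rw [card_eq_sum_ones]
      apply sum_congr rfl
      intro f hf
      have h1 := degA_le_one hM hM' (hCD (mem_filter.1 hf).1)
      have h2 := (mem_filter.1 hf).2
      omega
    rw [hz, ho, zero_add]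
    have := card_filter_add_card_filter_not (s := C) (p := fun f => degA M M' f = 0)
    omega
  have hB : (∑ f ∈ C, degB M M' f) + (C.filter fun f => degB M M' f = 0).card = C.card := by
    rw [← sum_filter_add_sum_filter_not C (fun f => degB M M' f = 0) (degB M M')]
    have hz : ∑ f ∈ C.filter (fun f => degB M M' f = 0), degB M M' f = 0 := by
      apply sum_eq_zero
      intro f hf
      exact (mem_filter.1 hf).2
    have ho : ∑ f ∈ C.filter (fun f => ¬ degB M M' f = 0), degB M M' f =
        (C.filter fun f => ¬ degB M M' f = 0).card := by
      rw [card_eq_sum_ones]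
      apply sum_congr rfl
      intro f hf
      have h1 := degB_le_one hM hM' (hCD (mem_filter.1 hf).1)
      have h2 := (mem_filter.1 hf).2
      omega
    rw [hz, ho, zero_add]
    have := card_filter_add_card_filter_not (s := C) (p := fun f => degB M M' f = 0)
    omega
  have hsig := sumdeg (M := M) (M' := M') he₀
  rw [card_sigma, ← hCdef] at hsig
  have hsum : ∑ f ∈ C, (nbr M M' f).card = (∑ f ∈ C, degA M M' f) + ∑ f ∈ C, degB M M' f := by
    rw [← sum_add_distrib]
    exact sum_congr rfl fun f _ => nbr_card_eq
  have hA0 : (C.filter fun f => degA M M' f = 0).card = defA' M M' C + defA M M' C := by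
    rw [defA, defA']
    conv_lhs => rw [subset_DD_eq_union hCD]
    rw [filter_union, card_union_of_disjoint]
    exact disjoint_filter_filter (inter_disj C)
  have hB0 : (C.filter fun f => degB M M' f = 0).card = defB' M M' C + defB M M' C := by
    rw [defB, defB']
    conv_lhs => rw [subset_DD_eq_union hCD]
    rw [filter_union, card_union_of_disjoint]
    exact disjoint_filter_filter (inter_disj C)
  rw [hsum] at hsig
  omega


lemma Closed.union {S T : Finset (A × B)} (h1 : Closed M M' S) (h2 : Closed M M' T) :
    Closed M M' (S ∪ T) := by
  refine ⟨union_subset h1.1 h2.1, fun e he g hg hne hsh => ?_⟩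
  rw [mem_union] at he ⊢
  rcases he with he | he
  · exact Or.inl (h1.2 e he g hg hne hsh)
  · exact Or.inr (h2.2 e he g hg hne hsh)

lemma Closed.sdiff {S T : Finset (A × B)} (h1 : Closed M M' S) (h2 : Closed M M' T) :
    Closed M M' (S \ T) := by
  refine ⟨(sdiff_subset).trans h1.1, fun e he g hg hne hsh => ?_⟩
  rw [mem_sdiff] at he ⊢
  refine ⟨h1.2 e he.1 g hg hne hsh, fun hgT => he.2 ?_⟩
  exact h2.2 g hgT e (h1.1 he.1) (Ne.symm hne) (hsh.imp Eq.symm Eq.symm)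

lemma card_union_inter {S T : Finset (A × B)} (hd : Disjoint S T) (X : Finset (A × B)) :
    ((S ∪ T) ∩ X).card = (S ∩ X).card + (T ∩ X).card := by
  rw [union_inter_distrib_right, card_union_of_disjoint]
  exact hd.mono inter_subset_left inter_subset_left

lemma filter_card_union_inter {S T : Finset (A × B)} (hd : Disjoint S T)
    (X : Finset (A × B)) (p : A × B → Prop) [DecidablePred p] :
    (((S ∪ T) ∩ X).filter p).card = ((S ∩ X).filter p).card + ((T ∩ X).filter p).card := by
  rw [union_inter_distrib_right, filter_union, card_union_of_disjoint]
  exact (hd.mono inter_subset_left inter_subset_left).mono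
    (filter_subset _ _) (filter_subset _ _)

lemma card_inter_split {C S : Finset (A × B)} (hCS : C ⊆ S) (X : Finset (A × B)) :
    (S ∩ X).card = ((S \ C) ∩ X).card + (C ∩ X).card := by
  conv_lhs => rw [← sdiff_union_of_subset hCS]
  exact card_union_inter sdiff_disjoint X

lemma find_comp {X Y : Finset (A × B)} :
    ∀ S : Finset (A × B), Closed M M' S → (S ∩ Y).card < (S ∩ X).card →
      ∃ f ∈ S, ((comp M M' f) ∩ Y).card < ((comp M M' f) ∩ X).card := by
  intro S
  induction S using Finset.strongInduction with
  | _ S ih =>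
    intro hS hlt
    have hne : S.Nonempty := by
      rcases S.eq_empty_or_nonempty with rfl | h
      · simp at hlt
      · exact h
    obtain ⟨f₀, hf₀⟩ := hne
    by_cases hc : ((comp M M' f₀) ∩ Y).card < ((comp M M' f₀) ∩ X).card
    · exact ⟨f₀, hf₀, hc⟩
    · push_neg at hc
      have hCS : comp M M' f₀ ⊆ S := comp_subset_of_closed hS hf₀
      have hCne : (comp M M' f₀).Nonempty := ⟨f₀, self_mem_comp (hS.1 hf₀)⟩
      have hssub : S \ comp M M' f₀ ⊂ S := by
        obtain ⟨x, hx⟩ := hCne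
        refine Finset.ssubset_iff_of_subset sdiff_subset |>.2 ⟨x, hCS hx, ?_⟩
        simp [hx]
      have hclosed : Closed M M' (S \ comp M M' f₀) := hS.sdiff (comp_closed f₀)
      have h1 := card_inter_split hCS X
      have h2 := card_inter_split hCS Y
      have hlt' : ((S \ comp M M' f₀) ∩ Y).card < ((S \ comp M M' f₀) ∩ X).card := by omega
      obtain ⟨f, hf, hres⟩ := ih _ hssub hclosed hlt'
      exact ⟨f, (mem_sdiff.1 hf).1, hres⟩

lemma mixed_case (hM' : PW M') {R : Finset (A × B)} (hR : Closed M M' R)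
    {e f : A × B} (he : e ∈ M ∧ e ∉ R) (hf : f ∈ R ∧ f ∈ M' ∧ f ∉ M)
    (hne : e ≠ f) (hsh : e.1 = f.1 ∨ e.2 = f.2) : False := by
  have heM' : e ∉ M' := by
    intro h
    rcases hsh with h1 | h1
    · exact hne (hM'.eq_of_fst h hf.2.1 h1)
    · exact hne (hM'.eq_of_snd h hf.2.1 h1)
  have heDD : e ∈ DD M M' := mem_DD.2 (Or.inl ⟨he.1, heM'⟩)
  exact he.2 (hR.2 f hf.1 e heDD hne hsh)

lemma swap_matching (hM : PW M) (hM' : PW M') {R : Finset (A × B)} (hR : Closed M M' R) :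
    PW ((M \ R) ∪ (R ∩ (M' \ M))) := by
  intro e he f hf hnef
  rw [mem_union, mem_sdiff, mem_inter, mem_sdiff] at he hf
  constructor
  · intro heq
    rcases he with he | he <;> rcases hf with hf | hf
    · exact (hM e he.1 f hf.1 hnef).1 heq
    · exact mixed_case hM' hR he ⟨hf.1, hf.2.1, hf.2.2⟩ hnef (Or.inl heq)
    · exact mixed_case hM' hR hf ⟨he.1, he.2.1, he.2.2⟩ (Ne.symm hnef) (Or.inl heq.symm)
    · exact (hM' e he.2.1 f hf.2.1 hnef).1 heq
  · intro heq
    rcases he with he | he <;> rcases hf with hf | hf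
    · exact (hM e he.1 f hf.1 hnef).2 heq
    · exact mixed_case hM' hR he ⟨hf.1, hf.2.1, hf.2.2⟩ hnef (Or.inr heq)
    · exact mixed_case hM' hR hf ⟨he.1, he.2.1, he.2.2⟩ (Ne.symm hnef) (Or.inr heq.symm)
    · exact (hM' e he.2.1 f hf.2.1 hnef).2 heq

lemma key (c : A × B → ℝ) (hM : PW M) (hM' : PW M') (hcard : M.card = M'.card)
    (hmin : ∀ N : Finset (A × B), PW N → N.card = M.card →
      ∑ e ∈ N, c e < ∑ e ∈ M, c e → (M' \ M).card ≤ (N \ M).card)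
    (hcost : ∑ e ∈ M', c e < ∑ e ∈ M, c e)
    {R : Finset (A × B)} (hR : Closed M M' R) (heq : mm M M' R = mm' M M' R)
    (hne : R.Nonempty) : R = DD M M' := by
  have hMR : M ∩ R = R ∩ (M \ M') := by
    ext e
    simp only [mem_inter, mem_sdiff]
    constructor
    · rintro ⟨h1, h2⟩
      refine ⟨h2, h1, fun h3 => ?_⟩
      rcases mem_DD.1 (hR.1 h2) with h | h
      · exact h.2 h3
      · exact h.2 h1
    · rintro ⟨h1, h2, _⟩
      exact ⟨h2, h1⟩
  have hM'R : M' ∩ R = R ∩ (M' \ M) := by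
    ext e
    simp only [mem_inter, mem_sdiff]
    constructor
    · rintro ⟨h1, h2⟩
      refine ⟨h2, h1, fun h3 => ?_⟩
      rcases mem_DD.1 (hR.1 h2) with h | h
      · exact h.2 h1
      · exact h.2 h3
    · rintro ⟨h1, h2, _⟩
      exact ⟨h2, h1⟩
  have hcards : (M \ M').card = (M' \ M).card := by
    have h1 := card_sdiff_add_card_inter M M'
    have h2 := card_sdiff_add_card_inter M' M
    rw [inter_comm] at h2
    omega
  have hdisjM : Disjoint (M \ R) (R ∩ (M' \ M)) := by
    rw [Finset.disjoint_left]
    intro x h1 h2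
    exact (mem_sdiff.1 h1).2 (mem_inter.1 h2).1
  have hdisjM' : Disjoint (M' \ R) (R ∩ (M \ M')) := by
    rw [Finset.disjoint_left]
    intro x h1 h2
    exact (mem_sdiff.1 h1).2 (mem_inter.1 h2).1
  have hsumM : ∑ e ∈ M, c e = (∑ e ∈ M \ R, c e) + ∑ e ∈ R ∩ (M \ M'), c e := by
    rw [← hMR, ← sum_union (disjoint_sdiff_inter M R), sdiff_union_inter]
  have hsumM' : ∑ e ∈ M', c e = (∑ e ∈ M' \ R, c e) + ∑ e ∈ R ∩ (M' \ M), c e := by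
    rw [← hM'R, ← sum_union (disjoint_sdiff_inter M' R), sdiff_union_inter]
  have hcardM : (M \ R).card + mm M M' R = M.card := by
    rw [mm, ← hMR]
    exact card_sdiff_add_card_inter M R
  have hcardM' : (M' \ R).card + mm' M M' R = M'.card := by
    rw [mm', ← hM'R]
    exact card_sdiff_add_card_inter M' R
  by_cases hcmp : ∑ e ∈ R ∩ (M' \ M), c e < ∑ e ∈ R ∩ (M \ M'), c e
  · -- swap in the M' edges of R
    set N := (M \ R) ∪ (R ∩ (M' \ M)) with hN
    have hNpw : PW N := swap_matching hM hM' hR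
    have hNcard : N.card = M.card := by
      rw [hN, card_union_of_disjoint hdisjM]
      have : (R ∩ (M' \ M)).card = mm' M M' R := rfl
      omega
    have hNcost : ∑ e ∈ N, c e < ∑ e ∈ M, c e := by
      rw [hN, sum_union hdisjM, hsumM]
      linarith
    have hminN := hmin N hNpw hNcard hNcost
    have hNdiff : N \ M = R ∩ (M' \ M) := by
      ext x
      simp only [hN, mem_sdiff, mem_union, mem_inter]
      tauto
    rw [hNdiff] at hminN
    have hset : R ∩ (M' \ M) = M' \ M :=
      eq_of_subset_of_card_le inter_subset_right hminN
    have hset2 : R ∩ (M \ M') = M \ M' := by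
      apply eq_of_subset_of_card_le inter_subset_right
      have e1 : (R ∩ (M' \ M)).card = (M' \ M).card := by rw [hset]
      have e2 : mm M M' R = mm' M M' R := heq
      rw [mm, mm'] at e2
      omega
    apply Finset.Subset.antisymm hR.1
    rw [DD]
    apply union_subset
    · rw [← hset2]; exact inter_subset_left
    · rw [← hset]; exact inter_subset_left
  · push_neg at hcmp
    set N := (M' \ R) ∪ (R ∩ (M \ M')) with hN
    have hNpw : PW N := by
      have := swap_matching (M := M') (M' := M) hM' hM hR.symm
      exact this
    have hNcard : N.card = M.card := by
      rw [hN, card_union_of_disjoint hdisjM']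
      have : (R ∩ (M \ M')).card = mm M M' R := rfl
      omega
    have hNcost : ∑ e ∈ N, c e < ∑ e ∈ M, c e := by
      rw [hN, sum_union hdisjM']
      have : (∑ e ∈ M' \ R, c e) + ∑ e ∈ R ∩ (M \ M'), c e ≤ ∑ e ∈ M', c e := by
        rw [hsumM']
        linarith
      linarith
    have hminN := hmin N hNpw hNcard hNcost
    have hNdiff : N \ M = (M' \ M) \ R := by
      ext x
      simp only [hN, mem_sdiff, mem_union, mem_inter]
      tauto
    rw [hNdiff] at hminN
    have hsplit : ((M' \ M) \ R).card + ((M' \ M) ∩ R).card = (M' \ M).card :=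
      card_sdiff_add_card_inter _ _
    rw [inter_comm] at hsplit
    have hmm'0 : mm' M M' R = 0 := by
      have : (R ∩ (M' \ M)).card = mm' M M' R := rfl
      omega
    have hmm0 : mm M M' R = 0 := by omega
    have hr0 : R.card = 0 := by
      rw [card_R_split hR.1]
      omega
    exact absurd (card_eq_zero.1 hr0) (Finset.nonempty_iff_ne_empty.1 hne)


lemma main (c : A × B → ℝ) (hM : PW M) (hM' : PW M') (hcard : M.card = M'.card)
    (hmin : ∀ N : Finset (A × B), PW N → N.card = M.card →
      ∑ e ∈ N, c e < ∑ e ∈ M, c e → (M' \ M).card ≤ (N \ M).card)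
    (hcost : ∑ e ∈ M', c e < ∑ e ∈ M, c e) :
    defA M M' (DD M M') ≤ 1 ∧ defB M M' (DD M M') ≤ 1 := by
  have rX : ∀ R : Finset (A × B), (R ∩ (M \ M')).card = mm M M' R := fun _ => rfl
  have rY : ∀ R : Finset (A × B), (R ∩ (M' \ M)).card = mm' M M' R := fun _ => rfl
  have hcards : (M \ M').card = (M' \ M).card := by
    have h1 := card_sdiff_add_card_inter M M'
    have h2 := card_sdiff_add_card_inter M' M
    rw [inter_comm] at h2
    omega
  have hDne : (DD M M').Nonempty := by
    rcases (DD M M').eq_empty_or_nonempty with hD | h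
    · exfalso
      rw [DD] at hD
      have h1 := union_eq_empty.1 hD
      have hMM : M = M' := Finset.Subset.antisymm
        (sdiff_eq_empty_iff_subset.1 h1.1) (sdiff_eq_empty_iff_subset.1 h1.2)
      rw [hMM] at hcost
      exact lt_irrefl _ hcost
    · exact h
  obtain ⟨e₀, he₀⟩ := hDne
  have hDclosed : Closed M M' (DD M M') := ⟨Finset.Subset.refl _, fun e _ g hg _ _ => hg⟩
  have hDX : mm M M' (DD M M') = (M \ M').card := by
    rw [mm, DD, inter_eq_right.2 subset_union_left]
  have hDY : mm' M M' (DD M M') = (M' \ M).card := by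
    rw [mm', DD, inter_eq_right.2 subset_union_right]
  have hCclosed := comp_closed (M := M) (M' := M') e₀
  have hCDD : comp M M' e₀ ⊆ DD M M' := comp_subset_DD
  have hCne : (comp M M' e₀).Nonempty := ⟨e₀, self_mem_comp he₀⟩
  set C := comp M M' e₀ with hCdef
  have cf := count_fst hM hM' hCclosed
  have cs := count_snd hM hM' hCclosed
  have bud := budget hM hM' he₀
  rw [← hCdef] at bud
  rcases Nat.lt_trichotomy (mm M M' C) (mm' M M' C) with hlt | heqc | hgt
  · -- d(C) = +1 : find a -1 component
    have hfacts : defA M M' C = 1 ∧ defA' M M' C = 0 ∧ defB M M' C = 1 ∧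
        defB' M M' C = 0 ∧ mm' M M' C = mm M M' C + 1 := by omega
    set S := DD M M' \ C with hSdef
    have hSclosed : Closed M M' S := hDclosed.sdiff hCclosed
    have hsplX := card_inter_split hCDD (M \ M')
    have hsplY := card_inter_split hCDD (M' \ M)
    rw [rX, rX, rX, hDX] at hsplX
    rw [rY, rY, rY, hDY] at hsplY
    rw [← hSdef] at hsplX hsplY
    have hltS : (S ∩ (M' \ M)).card < (S ∩ (M \ M')).card := by
      rw [rX, rY]; omega
    obtain ⟨f, hfS, hflt⟩ := find_comp S hSclosed hltS
    have hfDD : f ∈ DD M M' := hSclosed.1 hfS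
    have cf2 := count_fst hM hM' (comp_closed (M := M) (M' := M') f)
    have cs2 := count_snd hM hM' (comp_closed (M := M) (M' := M') f)
    have bud2 := budget hM hM' hfDD
    rw [rX, rY] at hflt
    have hfacts2 : defA M M' (comp M M' f) = 0 ∧ defA' M M' (comp M M' f) = 1 ∧
        defB M M' (comp M M' f) = 0 ∧ defB' M M' (comp M M' f) = 1 ∧
        mm M M' (comp M M' f) = mm' M M' (comp M M' f) + 1 := by omega
    have hC2S : comp M M' f ⊆ S := comp_subset_of_closed hSclosed hfS
    have hdisj : Disjoint C (comp M M' f) :=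
      (Finset.disjoint_sdiff).mono_right hC2S
    have hRclosed : Closed M M' (C ∪ comp M M' f) := hCclosed.union (comp_closed f)
    have hmmR := card_union_inter hdisj (M \ M')
    have hmm'R := card_union_inter hdisj (M' \ M)
    rw [rX, rX, rX] at hmmR
    rw [rY, rY, rY] at hmm'R
    have heqR : mm M M' (C ∪ comp M M' f) = mm' M M' (C ∪ comp M M' f) := by omega
    have hRD : C ∪ comp M M' f = DD M M' :=
      key c hM hM' hcard hmin hcost hRclosed heqR
        ⟨e₀, mem_union_left _ (self_mem_comp he₀)⟩
    have hdefA : defA M M' (DD M M') = defA M M' C + defA M M' (comp M M' f) := by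
      rw [← hRD, defA, defA, defA, filter_card_union_inter hdisj]
    have hdefB : defB M M' (DD M M') = defB M M' C + defB M M' (comp M M' f) := by
      rw [← hRD, defB, defB, defB, filter_card_union_inter hdisj]
    omega
  · have hCD : C = DD M M' :=
      key c hM hM' hcard hmin hcost hCclosed heqc hCne
    rw [← hCD]
    omega
  · -- d(C) = -1 : find a +1 component
    have hfacts : defA M M' C = 0 ∧ defA' M M' C = 1 ∧ defB M M' C = 0 ∧
        defB' M M' C = 1 ∧ mm M M' C = mm' M M' C + 1 := by omega
    set S := DD M M' \ C with hSdef
    have hSclosed : Closed M M' S := hDclosed.sdiff hCclosed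
    have hsplX := card_inter_split hCDD (M \ M')
    have hsplY := card_inter_split hCDD (M' \ M)
    rw [rX, rX, rX, hDX] at hsplX
    rw [rY, rY, rY, hDY] at hsplY
    rw [← hSdef] at hsplX hsplY
    have hltS : (S ∩ (M \ M')).card < (S ∩ (M' \ M)).card := by
      rw [rX, rY]; omega
    obtain ⟨f, hfS, hflt⟩ := find_comp S hSclosed hltS
    have hfDD : f ∈ DD M M' := hSclosed.1 hfS
    have cf2 := count_fst hM hM' (comp_closed (M := M) (M' := M') f)
    have cs2 := count_snd hM hM' (comp_closed (M := M) (M' := M') f)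
    have bud2 := budget hM hM' hfDD
    rw [rX, rY] at hflt
    have hfacts2 : defA M M' (comp M M' f) = 1 ∧ defA' M M' (comp M M' f) = 0 ∧
        defB M M' (comp M M' f) = 1 ∧ defB' M M' (comp M M' f) = 0 ∧
        mm' M M' (comp M M' f) = mm M M' (comp M M' f) + 1 := by omega
    have hC2S : comp M M' f ⊆ S := comp_subset_of_closed hSclosed hfS
    have hdisj : Disjoint C (comp M M' f) :=
      (Finset.disjoint_sdiff).mono_right hC2S
    have hRclosed : Closed M M' (C ∪ comp M M' f) := hCclosed.union (comp_closed f)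
    have hmmR := card_union_inter hdisj (M \ M')
    have hmm'R := card_union_inter hdisj (M' \ M)
    rw [rX, rX, rX] at hmmR
    rw [rY, rY, rY] at hmm'R
    have heqR : mm M M' (C ∪ comp M M' f) = mm' M M' (C ∪ comp M M' f) := by omega
    have hRD : C ∪ comp M M' f = DD M M' :=
      key c hM hM' hcard hmin hcost hRclosed heqR
        ⟨e₀, mem_union_left _ (self_mem_comp he₀)⟩
    have hdefA : defA M M' (DD M M') = defA M M' C + defA M M' (comp M M' f) := by
      rw [← hRD, defA, defA, defA, filter_card_union_inter hdisj]
    have hdefB : defB M M' (DD M M') = defB M M' C + defB M M' (comp M M' f) := by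
      rw [← hRD, defB, defB, defB, filter_card_union_inter hdisj]
    omega

end MatchLoc

/-- `M` is a `k`-matching: a set of `k` edges of the complete bipartite graph on parts
`A` and `B`, no two of which share a vertex. -/
def IsKMatching {A B : Type*} (M : Finset (A × B)) (k : ℕ) : Prop :=
  M.card = k ∧ ∀ e ∈ M, ∀ f ∈ M, e ≠ f → e.1 ≠ f.1 ∧ e.2 ≠ f.2

/-- Locality: if a `k`-matching `M` is not of minimum cost, then there is a cheaper
`k`-matching `M'` covering at most one vertex of `A` and at most one vertex of `B`
that are not covered by `M`. -/
theorem matching_locality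
    {A B : Type*} [Fintype A] [Fintype B] [DecidableEq A] [DecidableEq B]
    (c : A × B → ℝ) (hc : ∀ e, 0 ≤ c e) (k : ℕ)
    (M : Finset (A × B)) (hM : IsKMatching M k)
    (hnotmin : ∃ M'', IsKMatching M'' k ∧ ∑ e ∈ M'', c e < ∑ e ∈ M, c e) :
    ∃ M', IsKMatching M' k ∧ (∑ e ∈ M', c e < ∑ e ∈ M, c e) ∧
      (M'.image Prod.fst \ M.image Prod.fst).card ≤ 1 ∧
      (M'.image Prod.snd \ M.image Prod.snd).card ≤ 1 := by
  classical
  open MatchLoc in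
  obtain ⟨M₀, hM₀, hM₀cost⟩ := hnotmin
  set T : Finset (Finset (A × B)) :=
    Finset.univ.filter fun N => IsKMatching N k ∧ ∑ e ∈ N, c e < ∑ e ∈ M, c e with hT
  have hTne : T.Nonempty := by
    refine ⟨M₀, ?_⟩
    simp only [hT, Finset.mem_filter, Finset.mem_univ, true_and]
    exact ⟨hM₀, hM₀cost⟩
  obtain ⟨M', hM'T, hmin⟩ := T.exists_min_image (fun N => (N \ M).card) hTne
  simp only [hT, Finset.mem_filter, Finset.mem_univ, true_and] at hM'T
  obtain ⟨hM'k, hM'cost⟩ := hM'T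
  have hMpw : MatchLoc.PW M := hM.2
  have hM'pw : MatchLoc.PW M' := hM'k.2
  have hcard : M.card = M'.card := by rw [hM.1, hM'k.1]
  have hminN : ∀ N : Finset (A × B), MatchLoc.PW N → N.card = M.card →
      ∑ e ∈ N, c e < ∑ e ∈ M, c e → (M' \ M).card ≤ (N \ M).card := by
    intro N hpw hcardN hcostN
    apply hmin
    simp only [hT, Finset.mem_filter, Finset.mem_univ, true_and]
    exact ⟨⟨by rw [hcardN, hM.1], hpw⟩, hcostN⟩
  obtain ⟨hA1, hB1⟩ := MatchLoc.main c hMpw hM'pw hcard hminN hM'cost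
  refine ⟨M', hM'k, hM'cost, ?_, ?_⟩
  · have hsub : M'.image Prod.fst \ M.image Prod.fst ⊆
        ((M' \ M).filter fun e => MatchLoc.degA M M' e = 0).image Prod.fst := by
      intro a ha
      rw [Finset.mem_sdiff] at ha
      obtain ⟨h1, h2⟩ := ha
      obtain ⟨e, heM', hea⟩ := Finset.mem_image.1 h1
      have heM : e ∉ M := fun h => h2 (Finset.mem_image.2 ⟨e, h, hea⟩)
      have hdeg : MatchLoc.degA M M' e = 0 := by
        rw [MatchLoc.degA, Finset.card_eq_zero, Finset.filter_eq_empty_iff]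
        rintro g hg ⟨hgne, hg1⟩
        have hopp := MatchLoc.mem_opp_fst (M := M') (M' := M) hM'pw heM' heM
          (MatchLoc.DD_comm (M := M) (M' := M') ▸ hg) hgne hg1
        exact h2 (Finset.mem_image.2 ⟨g, hopp.1, hg1.trans hea⟩)
      exact Finset.mem_image.2
        ⟨e, Finset.mem_filter.2 ⟨Finset.mem_sdiff.2 ⟨heM', heM⟩, hdeg⟩, hea⟩
    have heqset : ((M' \ M).filter fun e => MatchLoc.degA M M' e = 0).card =
        MatchLoc.defA M M' (MatchLoc.DD M M') := by
      rw [MatchLoc.defA]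
      congr 2
      rw [MatchLoc.DD, Finset.inter_eq_right.2 Finset.subset_union_right]
    calc (M'.image Prod.fst \ M.image Prod.fst).card
        ≤ (((M' \ M).filter fun e => MatchLoc.degA M M' e = 0).image Prod.fst).card :=
          Finset.card_le_card hsub
      _ ≤ ((M' \ M).filter fun e => MatchLoc.degA M M' e = 0).card :=
          Finset.card_image_le
      _ ≤ 1 := by rw [heqset]; exact hA1
  · have hsub : M'.image Prod.snd \ M.image Prod.snd ⊆
        ((M' \ M).filter fun e => MatchLoc.degB M M' e = 0).image Prod.snd := by
      intro a ha
      rw [Finset.mem_sdiff] at ha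
      obtain ⟨h1, h2⟩ := ha
      obtain ⟨e, heM', hea⟩ := Finset.mem_image.1 h1
      have heM : e ∉ M := fun h => h2 (Finset.mem_image.2 ⟨e, h, hea⟩)
      have hdeg : MatchLoc.degB M M' e = 0 := by
        rw [MatchLoc.degB, Finset.card_eq_zero, Finset.filter_eq_empty_iff]
        rintro g hg ⟨hgne, hg1⟩
        have hopp := MatchLoc.mem_opp_snd (M := M') (M' := M) hM'pw heM' heM
          (MatchLoc.DD_comm (M := M) (M' := M') ▸ hg) hgne hg1
        exact h2 (Finset.mem_image.2 ⟨g, hopp.1, hg1.trans hea⟩)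
      exact Finset.mem_image.2
        ⟨e, Finset.mem_filter.2 ⟨Finset.mem_sdiff.2 ⟨heM', heM⟩, hdeg⟩, hea⟩
    have heqset : ((M' \ M).filter fun e => MatchLoc.degB M M' e = 0).card =
        MatchLoc.defB M M' (MatchLoc.DD M M') := by
      rw [MatchLoc.defB]
      congr 2
      rw [MatchLoc.DD, Finset.inter_eq_right.2 Finset.subset_union_right]
    calc (M'.image Prod.snd \ M.image Prod.snd).card
        ≤ (((M' \ M).filter fun e => MatchLoc.degB M M' e = 0).image Prod.snd).card :=
          Finset.card_le_card hsub
      _ ≤ ((M' \ M).filter fun e => MatchLoc.degB M M' e = 0).card :=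
          Finset.card_image_le
      _ ≤ 1 := by rw [heqset]; exact hB1
end

section
/- Nesting of bipartite matchings: let A = {a₁,…,a_m} and B = {b₁,…,b_n} be the parts of a complete bipartite graph with nonnegative edge costs, and let M be a minimum cost (k-1)-matching on the induced subgraph with parts A and B∖{b_n}. Then there exists a minimum cost k-matching N on the full graph such that every vertex of A matched by M is also matched by N; consequently N matches exactly one vertex of A not matched by M. -/
open Finset Relation

theorem Relation.ReflTransGen.eq_of_forall_not_rel {γ : Type*} {r : γ → γ → Prop} {a x y : γ}
    (hr : Relator.RightUnique r) (hx : ReflTransGen r a x) (hy : ReflTransGen r a y)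
    (hx' : ∀ z, ¬ r x z) (hy' : ∀ z, ¬ r y z) : x = y := by
  have terminal : ∀ {u v}, ReflTransGen r u v → (∀ z, ¬ r u z) → u = v :=
    fun huv hu => huv.cases_head.resolve_right fun ⟨z, hz, _⟩ => hu z hz
  rcases hx.total_of_right_unique hr hy with hxy | hyx
  · exact terminal hxy hx'
  · exact (terminal hyx hy').symm

namespace BipartiteMatching

section Matching

variable {α β : Type*} {M N : Finset (α × β)}

def IsMatching (M : Finset (α × β)) : Prop :=
  Set.InjOn Prod.fst (M : Set (α × β)) ∧ Set.InjOn Prod.snd (M : Set (α × β))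

theorem isKMatching_iff {k : ℕ} : IsKMatching M k ↔ M.card = k ∧ IsMatching M := by
  refine and_congr_right fun _ => ⟨fun h => ⟨?_, ?_⟩, fun h e he f hf hef => ⟨?_, ?_⟩⟩
  · intro e he f hf hef
    by_contra hne
    exact (h e he f hf hne).1 hef
  · intro e he f hf hef
    by_contra hne
    exact (h e he f hf hne).2 hef
  · exact fun h' => hef (h.1 he hf h')
  · exact fun h' => hef (h.2 he hf h')

theorem IsMatching.snd_eq (hM : IsMatching M) {x : α} {b b' : β} (h : (x, b) ∈ M)
    (h' : (x, b') ∈ M) : b = b' :=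
  congrArg Prod.snd (hM.1 h h' rfl)

theorem IsMatching.fst_eq (hM : IsMatching M) {x x' : α} {b : β} (h : (x, b) ∈ M)
    (h' : (x', b) ∈ M) : x = x' :=
  congrArg Prod.fst (hM.2 h h' rfl)

theorem IsMatching.card_image_fst [DecidableEq α] (hM : IsMatching M) :
    (M.image Prod.fst).card = M.card :=
  card_image_of_injOn hM.1

/-- Walking from `x` along its `M`-edge and then along an `N`-edge leads to `y`: the alternating
paths of `M ∪ N` are recorded through their vertices in `α`. -/
def AltStep (M N : Finset (α × β)) (x y : α) : Prop := ∃ b, (x, b) ∈ M ∧ (y, b) ∈ N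

theorem altStep_comm {x y : α} : AltStep N M y x ↔ AltStep M N x y :=
  exists_congr fun _ => and_comm

theorem altStep_rightUnique (hM : IsMatching M) (hN : IsMatching N) :
    Relator.RightUnique (AltStep M N) := by
  rintro x y y' ⟨b, hxb, hyb⟩ ⟨b', hxb', hyb'⟩
  obtain rfl := hM.snd_eq hxb hxb'
  exact hN.fst_eq hyb hyb'

theorem altStep_leftUnique (hM : IsMatching M) (hN : IsMatching N) :
    Relator.LeftUnique (AltStep M N) :=
  fun _ _ _ hx hx' => altStep_rightUnique hN hM (altStep_comm.2 hx) (altStep_comm.2 hx')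

def IsAltClosed (M N : Finset (α × β)) (S : Finset α) : Prop :=
  ∀ ⦃x y⦄, AltStep M N x y → (x ∈ S ↔ y ∈ S)

theorem IsAltClosed.symm {S : Finset α} (hS : IsAltClosed M N S) : IsAltClosed N M S :=
  fun _ _ hxy => (hS (altStep_comm.1 hxy)).symm

theorem IsAltClosed.union [DecidableEq α] {S T : Finset α} (hS : IsAltClosed M N S)
    (hT : IsAltClosed M N T) : IsAltClosed M N (S ∪ T) := by
  intro x y hxy
  simp only [mem_union, hS hxy, hT hxy]

end Matching

section SourcesAndSinks

variable {α β : Type*} [DecidableEq β] {M N : Finset (α × β)}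

open Classical

/-- The alternating path through `x` ends with the `M`-edge at `x`. -/
def IsSink (M N : Finset (α × β)) (x : α) : Prop := ∃ b ∉ N.image Prod.snd, (x, b) ∈ M

/-- The alternating path through `x` starts with the `N`-edge at `x`. -/
def IsSource (M N : Finset (α × β)) (x : α) : Prop := IsSink N M x

theorem IsSink.not_altStep (hM : IsMatching M) {x y : α} (hx : IsSink M N x) :
    ¬ AltStep M N x y := by
  obtain ⟨b, hb, hxb⟩ := hx
  rintro ⟨b', hxb', hyb'⟩
  obtain rfl := hM.snd_eq hxb hxb'
  exact hb (mem_image_of_mem _ hyb')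

theorem IsSource.not_altStep (hN : IsMatching N) {x y : α} (hy : IsSource M N y) :
    ¬ AltStep M N x y :=
  fun hxy => IsSink.not_altStep hN hy (altStep_comm.2 hxy)

theorem isSource_of_mem {b₀ : β} (hMb₀ : ∀ e ∈ M, e.2 ≠ b₀) {x : α} (hx : (x, b₀) ∈ N) :
    IsSource M N x :=
  ⟨b₀, fun hb => by obtain ⟨e, he, rfl⟩ := mem_image.1 hb; exact hMb₀ e he rfl, hx⟩

theorem card_filter_isSink [DecidableEq α] (hM : IsMatching M) (S : Finset α) :
    ((M.filter (·.1 ∈ S)).filter (·.2 ∉ N.image Prod.snd)).card =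
      (S.filter (IsSink M N)).card := by
  rw [← card_image_of_injOn (hM.1.mono (coe_subset.2 ((filter_subset _ _).trans
    (filter_subset _ _))))]
  congr 1
  ext x
  simp only [mem_image, mem_filter, IsSink, Prod.exists]
  constructor
  · rintro ⟨x, b, ⟨⟨hxb, hx⟩, hb⟩, rfl⟩
    exact ⟨hx, b, hb, hxb⟩
  · rintro ⟨hx, b, hb, hxb⟩
    exact ⟨x, b, ⟨⟨hxb, hx⟩, hb⟩, rfl⟩

theorem IsAltClosed.image_snd_filter [DecidableEq α] {S : Finset α} (hS : IsAltClosed M N S) :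
    ((N.filter (·.1 ∈ S)).filter (·.2 ∈ M.image Prod.snd)).image Prod.snd =
      (N.filter (·.1 ∈ S)).image Prod.snd ∩ (M.filter (·.1 ∈ S)).image Prod.snd := by
  ext b
  simp only [mem_image, mem_filter, mem_inter, Prod.exists, exists_and_right, exists_eq_right]
  constructor
  · rintro ⟨⟨y, hyb, hy⟩, x, hxb⟩
    exact ⟨⟨y, hyb, hy⟩, x, hxb, (hS ⟨b, hxb, hyb⟩).2 hy⟩
  · rintro ⟨hy, x, hxb, -⟩
    exact ⟨hy, x, hxb⟩

theorem IsAltClosed.card_add_card_filter_isSink [DecidableEq α] {S : Finset α}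
    (hM : IsMatching M) (hN : IsMatching N) (hS : IsAltClosed M N S) :
    (N.filter (·.1 ∈ S)).card + (S.filter (IsSink M N)).card =
      (M.filter (·.1 ∈ S)).card + (S.filter (IsSource M N)).card := by
  have hNsplit := card_filter_add_card_filter_not (s := N.filter (·.1 ∈ S))
    (·.2 ∈ M.image Prod.snd)
  have hMsplit := card_filter_add_card_filter_not (s := M.filter (·.1 ∈ S))
    (·.2 ∈ N.image Prod.snd)
  -- Both sides count, through their endpoint in `β`, the vertices of `β` covered at `S` by both.
  have hcommon : ((N.filter (·.1 ∈ S)).filter (·.2 ∈ M.image Prod.snd)).card =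
      ((M.filter (·.1 ∈ S)).filter (·.2 ∈ N.image Prod.snd)).card := by
    rw [← card_image_of_injOn (hN.2.mono (coe_subset.2 ((filter_subset _ _).trans
        (filter_subset _ _)))),
      ← card_image_of_injOn (hM.2.mono (coe_subset.2 ((filter_subset _ _).trans
        (filter_subset _ _)))),
      hS.image_snd_filter, hS.symm.image_snd_filter, inter_comm]
  have hsrc : ((N.filter (·.1 ∈ S)).filter (·.2 ∉ M.image Prod.snd)).card =
      (S.filter (IsSource M N)).card :=
    card_filter_isSink hN S
  rw [← card_filter_isSink hM S, ← hsrc]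
  omega

end SourcesAndSinks

section Orbits

variable {α β : Type*} [Fintype α] {M N : Finset (α × β)}

open Classical

/-- The vertices in `α` of the alternating path from `a` onwards. -/
noncomputable def orbit (M N : Finset (α × β)) (a : α) : Finset α :=
  univ.filter (ReflTransGen (AltStep M N) a)

theorem mem_orbit {a x : α} : x ∈ orbit M N a ↔ ReflTransGen (AltStep M N) a x := by
  simp [orbit]

theorem mem_orbit_self (a : α) : a ∈ orbit M N a :=
  mem_orbit.2 ReflTransGen.refl

theorem isAltClosed_orbit (hM : IsMatching M) (hN : IsMatching N) {a : α}
    (ha : ∀ x, ¬ AltStep M N x a) : IsAltClosed M N (orbit M N a) := by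
  intro x y hxy
  simp only [mem_orbit]
  refine ⟨fun hx => hx.tail hxy, fun hy => ?_⟩
  rcases hy.cases_tail with rfl | ⟨p, hp, hpy⟩
  · exact absurd hxy (ha x)
  · rwa [altStep_leftUnique hM hN hxy hpy]

theorem disjoint_orbit (hM : IsMatching M) (hN : IsMatching N) {a w : α}
    (ha : ∀ x, ¬ AltStep M N x a) (hw : ∀ x, ¬ AltStep M N x w) (hne : a ≠ w) :
    Disjoint (orbit M N a) (orbit M N w) := by
  refine disjoint_left.2 fun x hxa hxw => hne ?_
  exact ReflTransGen.eq_of_forall_not_rel (r := Function.swap (AltStep M N))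
    (fun _ _ _ h h' => altStep_leftUnique hM hN h h') (reflTransGen_swap.2 (mem_orbit.1 hxa))
    (reflTransGen_swap.2 (mem_orbit.1 hxw)) ha hw

theorem card_filter_isSink_orbit_le_one [DecidableEq β] (hM : IsMatching M)
    (hN : IsMatching N) (a : α) :
    ((orbit M N a).filter (IsSink M N)).card ≤ 1 := by
  refine card_le_one.2 fun x hx y hy => ?_
  simp only [mem_filter, mem_orbit] at hx hy
  exact ReflTransGen.eq_of_forall_not_rel (altStep_rightUnique hM hN) hx.1 hy.1
    (fun _ => hx.2.not_altStep hM) (fun _ => hy.2.not_altStep hM)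

theorem filter_isSource_orbit_subset [DecidableEq β] (hN : IsMatching N) (a : α) :
    (orbit M N a).filter (IsSource M N) ⊆ {a} := by
  intro x hx
  simp only [mem_filter, mem_orbit] at hx
  rcases hx.1.cases_tail with rfl | ⟨p, -, hpx⟩
  · exact mem_singleton_self _
  · exact absurd hpx (hx.2.not_altStep hN)

theorem filter_isSource_orbit_of_isSource [DecidableEq β] (hN : IsMatching N) {w : α}
    (hw : IsSource M N w) : (orbit M N w).filter (IsSource M N) = {w} :=
  subset_antisymm (filter_isSource_orbit_subset hN w)
    (singleton_subset_iff.2 (mem_filter.2 ⟨mem_orbit_self w, hw⟩))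

theorem filter_isSource_orbit_of_not_isSource [DecidableEq β] (hN : IsMatching N) {a : α}
    (ha : ¬ IsSource M N a) : (orbit M N a).filter (IsSource M N) = ∅ :=
  eq_empty_of_forall_notMem fun x hx => by
    obtain rfl := mem_singleton.1 (filter_isSource_orbit_subset hN a hx)
    exact ha (mem_filter.1 hx).2

theorem card_filter_isSource_eq [DecidableEq α] [DecidableEq β] (hM : IsMatching M)
    (hN : IsMatching N) (hcard : N.card = M.card + 1) :
    (univ.filter (IsSource M N)).card = (univ.filter (IsSink M N)).card + 1 := by
  have hcount := IsAltClosed.card_add_card_filter_isSink hM hN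
    (S := univ) fun _ _ _ => by simp only [mem_univ]
  simp only [mem_univ, filter_true] at hcount
  omega

theorem exists_isSource_forall_not_isSink [DecidableEq α] [DecidableEq β] (hM : IsMatching M)
    (hN : IsMatching N) (hcard : N.card = M.card + 1) {a : α} (ha : ∀ b, (a, b) ∉ N)
    (hsink : ∃ z ∈ orbit M N a, IsSink M N z) (b₀ : β) :
    ∃ w, IsSource M N w ∧ (w, b₀) ∉ N ∧ ∀ z ∈ orbit M N w, ¬ IsSink M N z := by
  by_contra! h
  set P := (univ.filter (IsSource M N)).filter (fun w => (w, b₀) ∉ N)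
  have hb₀ : ((univ.filter (IsSource M N)).filter (fun w => (w, b₀) ∈ N)).card ≤ 1 :=
    card_le_one.2 fun x hx y hy => hN.fst_eq (mem_filter.1 hx).2 (mem_filter.1 hy).2
  have hsplit : ((univ.filter (IsSource M N)).filter (fun w => (w, b₀) ∈ N)).card + P.card =
      (univ.filter (IsSource M N)).card :=
    card_filter_add_card_filter_not _
  have haP : a ∉ P := fun haP => by
    obtain ⟨b, -, hb⟩ := (mem_filter.1 (mem_filter.1 haP).1).2
    exact ha b hb
  have hstart : ∀ w ∈ insert a P, ∀ x, ¬ AltStep M N x w := by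
    intro w hw x
    rcases mem_insert.1 hw with rfl | hw
    · exact fun ⟨b, _, hb⟩ => ha b hb
    · exact (mem_filter.1 (mem_filter.1 hw).1).2.not_altStep hN
  -- The orbits of `a` and of the sources in `P` are disjoint and would each contain a sink.
  have hsinks : (insert a P).card ≤ (univ.filter (IsSink M N)).card := by
    refine (card_le_card_biUnion (f := fun w => (orbit M N w).filter (IsSink M N))
      (fun v hv w hw hvw => disjoint_filter_filter
        (disjoint_orbit hM hN (hstart v hv) (hstart w hw) hvw)) fun w hw => ?_).trans
      (card_le_card (biUnion_subset.2 fun w _ => filter_subset_filter _ (subset_univ _)))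
    rcases mem_insert.1 hw with rfl | hw
    · obtain ⟨z, hz, hzsink⟩ := hsink
      exact ⟨z, mem_filter.2 ⟨hz, hzsink⟩⟩
    · obtain ⟨hwsrc, hwb₀⟩ := mem_filter.1 hw
      obtain ⟨z, hz, hzsink⟩ := h w (mem_filter.1 hwsrc).2 hwb₀
      exact ⟨z, mem_filter.2 ⟨hz, hzsink⟩⟩
  rw [card_insert_of_notMem haP] at hsinks
  have := card_filter_isSource_eq hM hN hcard
  omega

theorem exists_isAltClosed_card_eq [DecidableEq α] [DecidableEq β] (hM : IsMatching M)
    (hN : IsMatching N) (hcard : N.card = M.card + 1) {b₀ : β} (hMb₀ : ∀ e ∈ M, e.2 ≠ b₀)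
    {a : α} (ha : ∀ b, (a, b) ∉ N) :
    ∃ S : Finset α, a ∈ S ∧ IsAltClosed M N S ∧
      (N.filter (·.1 ∈ S)).card = (M.filter (·.1 ∈ S)).card ∧ ∀ x ∈ S, (x, b₀) ∉ N := by
  have hstart : ∀ x, ¬ AltStep M N x a := fun x ⟨b, _, hb⟩ => ha b hb
  have hsrc : (orbit M N a).filter (IsSource M N) = ∅ :=
    filter_isSource_orbit_of_not_isSource hN fun ⟨b, _, hb⟩ => ha b hb
  have hb₀ : ∀ x ∈ orbit M N a, (x, b₀) ∉ N := fun x hx hxb₀ =>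
    (eq_empty_iff_forall_notMem.1 hsrc) x (mem_filter.2 ⟨hx, isSource_of_mem hMb₀ hxb₀⟩)
  have hOa := isAltClosed_orbit hM hN hstart
  by_cases hsink : ∃ z ∈ orbit M N a, IsSink M N z
  · obtain ⟨w, hw, hwb₀, hwsink⟩ := exists_isSource_forall_not_isSink hM hN hcard ha hsink b₀
    have hS := hOa.union (isAltClosed_orbit hM hN fun _ => hw.not_altStep hN)
    refine ⟨_, mem_union_left _ (mem_orbit_self a), hS, ?_, ?_⟩
    · have hsnk : ((orbit M N a ∪ orbit M N w).filter (IsSink M N)).card = 1 := by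
        rw [filter_union, filter_false_of_mem hwsink, union_empty]
        obtain ⟨z, hz, hzsink⟩ := hsink
        exact le_antisymm (card_filter_isSink_orbit_le_one hM hN a)
          (card_pos.2 ⟨z, mem_filter.2 ⟨hz, hzsink⟩⟩)
      have hcount := hS.card_add_card_filter_isSink hM hN
      rw [hsnk, filter_union, hsrc, filter_isSource_orbit_of_isSource hN hw, empty_union,
        card_singleton] at hcount
      omega
    · intro x hx hxb₀
      rcases mem_union.1 hx with hx | hx
      · exact hb₀ x hx hxb₀
      · have hxw := mem_filter.2 ⟨hx, isSource_of_mem hMb₀ hxb₀⟩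
        rw [filter_isSource_orbit_of_isSource hN hw, mem_singleton] at hxw
        exact hwb₀ (hxw ▸ hxb₀)
  · refine ⟨orbit M N a, mem_orbit_self a, hOa, ?_, hb₀⟩
    have hcount := hOa.card_add_card_filter_isSink hM hN
    rwa [hsrc, filter_false_of_mem fun z hz hzsink => hsink ⟨z, hz, hzsink⟩, card_empty,
      add_zero, add_zero] at hcount

end Orbits

section Exchange

variable {α β : Type*} [DecidableEq α] {M N : Finset (α × β)} {S : Finset α}

theorem disjoint_filter_notMem_filter_mem :
    Disjoint (M.filter (·.1 ∉ S)) (N.filter (·.1 ∈ S)) :=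
  disjoint_left.2 fun _ he he' => (mem_filter.1 he).2 (mem_filter.1 he').2

variable [DecidableEq β]

def swapOn (M N : Finset (α × β)) (S : Finset α) : Finset (α × β) :=
  M.filter (·.1 ∉ S) ∪ N.filter (·.1 ∈ S)

theorem IsMatching.swapOn (hM : IsMatching M) (hN : IsMatching N) (hS : IsAltClosed M N S) :
    IsMatching (swapOn M N S) := by
  have hdisj := disjoint_coe.2 (disjoint_filter_notMem_filter_mem (M := M) (N := N) (S := S))
  rw [IsMatching, BipartiteMatching.swapOn, coe_union]
  refine ⟨(Set.injOn_union hdisj).2 ⟨hM.1.mono (coe_subset.2 (filter_subset _ _)),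
    hN.1.mono (coe_subset.2 (filter_subset _ _)), ?_⟩, (Set.injOn_union hdisj).2
    ⟨hM.2.mono (coe_subset.2 (filter_subset _ _)), hN.2.mono (coe_subset.2 (filter_subset _ _)),
    ?_⟩⟩
  · rintro e he f hf hef
    simp only [coe_filter, Set.mem_ofPred_eq] at he hf
    exact he.2 (hef ▸ hf.2)
  · rintro ⟨x, b⟩ he ⟨y, b'⟩ hf (rfl : b = b')
    simp only [coe_filter, Set.mem_ofPred_eq] at he hf
    exact he.2 ((hS ⟨b, he.1, hf.1⟩).2 hf.2)

theorem card_swapOn :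
    (swapOn M N S).card + (M.filter (·.1 ∈ S)).card = M.card + (N.filter (·.1 ∈ S)).card := by
  rw [swapOn, card_union_of_disjoint disjoint_filter_notMem_filter_mem,
    ← card_filter_add_card_filter_not (s := M) (·.1 ∈ S)]
  omega

theorem sum_swapOn_add_sum_swapOn {R : Type*} [AddCommMonoid R] (c : α × β → R) :
    ∑ e ∈ swapOn M N S, c e + ∑ e ∈ swapOn N M S, c e = ∑ e ∈ M, c e + ∑ e ∈ N, c e := by
  rw [swapOn, swapOn, sum_union disjoint_filter_notMem_filter_mem,
    sum_union disjoint_filter_notMem_filter_mem,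
    ← sum_filter_add_sum_filter_not M (·.1 ∈ S), ← sum_filter_add_sum_filter_not N (·.1 ∈ S)]
  abel

theorem mem_image_fst_swapOn {x : α} : x ∈ (swapOn M N S).image Prod.fst ↔
    x ∉ S ∧ x ∈ M.image Prod.fst ∨ x ∈ S ∧ x ∈ N.image Prod.fst := by
  simp only [swapOn, image_union, mem_union, mem_image, mem_filter, Prod.exists,
    exists_and_right, exists_eq_right]
  tauto

theorem exists_exchange [Fintype α] {R : Type*} [AddCommMonoid R]
    (c : α × β → R) (hM : IsMatching M) (hN : IsMatching N) (hcard : N.card = M.card + 1)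
    {b₀ : β} (hMb₀ : ∀ e ∈ M, e.2 ≠ b₀) {a : α} (haM : a ∈ M.image Prod.fst)
    (haN : a ∉ N.image Prod.fst) :
    ∃ M' N' : Finset (α × β), IsMatching M' ∧ IsMatching N' ∧ M'.card = M.card ∧
      N'.card = N.card ∧ (∀ e ∈ M', e.2 ≠ b₀) ∧
      ∑ e ∈ M', c e + ∑ e ∈ N', c e = ∑ e ∈ M, c e + ∑ e ∈ N, c e ∧
      insert a (M.image Prod.fst ∩ N.image Prod.fst) ⊆ N'.image Prod.fst := by
  obtain ⟨S, haS, hS, hScard, hSb₀⟩ := exists_isAltClosed_card_eq hM hN hcard hMb₀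
    fun b hb => haN (mem_image_of_mem Prod.fst hb)
  refine ⟨swapOn M N S, swapOn N M S, hM.swapOn hN hS, hN.swapOn hM hS.symm, ?_, ?_, ?_,
    sum_swapOn_add_sum_swapOn c, ?_⟩
  · have := card_swapOn (M := M) (N := N) (S := S)
    omega
  · have := card_swapOn (M := N) (N := M) (S := S)
    omega
  · intro e he
    rcases mem_union.1 he with he | he
    · exact hMb₀ e (mem_filter.1 he).1
    · exact fun h => hSb₀ e.1 (mem_filter.1 he).2 (h ▸ (mem_filter.1 he).1)
  · intro x hx
    rw [mem_image_fst_swapOn]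
    rcases mem_insert.1 hx with rfl | hx
    · exact Or.inr ⟨haS, haM⟩
    · obtain ⟨hxM, hxN⟩ := mem_inter.1 hx
      by_cases hxS : x ∈ S
      · exact Or.inr ⟨hxS, hxM⟩
      · exact Or.inl ⟨hxS, hxN⟩

end Exchange

theorem exists_isKMatching {m n k : ℕ} (hkm : k ≤ m) (hkn : k ≤ n) :
    ∃ N : Finset (Fin m × Fin n), IsKMatching N k := by
  let diag : Fin k ↪ Fin m × Fin n :=
    ⟨fun i => (Fin.castLE hkm i, Fin.castLE hkn i),
      fun i j h => Fin.castLE_injective hkm (congrArg Prod.fst h)⟩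
  refine ⟨univ.map diag, isKMatching_iff.2 ⟨by simp, ?_, ?_⟩⟩
  all_goals
    intro e he f hf h
    simp only [coe_map, coe_univ, Set.image_univ, Set.mem_range] at he hf
    obtain ⟨i, rfl⟩ := he
    obtain ⟨j, rfl⟩ := hf
  · rw [Fin.castLE_injective hkm h]
  · rw [Fin.castLE_injective hkn h]

end BipartiteMatching

open BipartiteMatching

theorem matching_nesting_general
    (m n k : ℕ) (hk : 1 ≤ k) (hkm : k ≤ m) (hkn : k ≤ n + 1)
    (c : Fin m × Fin (n + 1) → ℝ)
    (M : Finset (Fin m × Fin (n + 1)))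
    (hM : IsKMatching M (k - 1))
    (hMavoid : ∀ e ∈ M, e.2 ≠ Fin.last n)
    (hMmin : ∀ M' : Finset (Fin m × Fin (n + 1)),
      IsKMatching M' (k - 1) → (∀ e ∈ M', e.2 ≠ Fin.last n) →
      ∑ e ∈ M, c e ≤ ∑ e ∈ M', c e) :
    ∃ N : Finset (Fin m × Fin (n + 1)), IsKMatching N k ∧
      (∀ N' : Finset (Fin m × Fin (n + 1)), IsKMatching N' k →
        ∑ e ∈ N, c e ≤ ∑ e ∈ N', c e) ∧
      M.image Prod.fst ⊆ N.image Prod.fst ∧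
      (N.image Prod.fst \ M.image Prod.fst).card = 1 := by
  obtain ⟨N₀, hN₀, hN₀min⟩ := Set.exists_min_image {N | IsKMatching N k}
    (fun N => ∑ e ∈ N, c e) (Set.toFinite _) (exists_isKMatching hkm hkn)
  obtain ⟨N, ⟨hN, hNN₀⟩, hNmax⟩ := Set.exists_max_image
    {N | IsKMatching N k ∧ ∑ e ∈ N, c e ≤ ∑ e ∈ N₀, c e}
    (fun N => (M.image Prod.fst ∩ N.image Prod.fst).card) (Set.toFinite _) ⟨N₀, hN₀, le_rfl⟩
  have hNmin : ∀ N', IsKMatching N' k → ∑ e ∈ N, c e ≤ ∑ e ∈ N', c e :=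
    fun N' hN' => hNN₀.trans (hN₀min N' hN')
  rw [isKMatching_iff] at hM hN
  have hsub : M.image Prod.fst ⊆ N.image Prod.fst := by
    intro a haM
    by_contra haN
    obtain ⟨M', N', hM', hN', hM'card, hN'card, hM'avoid, hsum, hgrow⟩ :=
      exists_exchange c hM.2 hN.2 (by omega) hMavoid haM haN
    have hcost := hMmin M' (isKMatching_iff.2 ⟨by omega, hM'⟩) hM'avoid
    have hmax := hNmax N' ⟨isKMatching_iff.2 ⟨by omega, hN'⟩, by linarith⟩
    have hlt := card_le_card (subset_inter (insert_subset haM inter_subset_left) hgrow)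
    rw [card_insert_of_notMem fun h => haN (mem_inter.1 h).2] at hlt
    omega
  refine ⟨N, isKMatching_iff.2 hN, hNmin, hsub, ?_⟩
  rw [card_sdiff_of_subset hsub, hN.2.card_image_fst, hM.2.card_image_fst]
  omega

/-- Nesting: if `M` is a minimum cost `(k-1)`-matching on the subgraph obtained by deleting
the last vertex `b_n` of `B`, then there is a minimum cost `k`-matching `N` on the full
graph matching all vertices of `A` matched by `M`, hence exactly one additional vertex
of `A`. -/
theorem matching_nesting
    (m n k : ℕ) (hk : 1 ≤ k) (hkm : k ≤ m) (hkn : k ≤ n + 1)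
    (c : Fin m × Fin (n + 1) → ℝ) (hc : ∀ e, 0 ≤ c e)
    (M : Finset (Fin m × Fin (n + 1)))
    (hM : IsKMatching M (k - 1))
    (hMavoid : ∀ e ∈ M, e.2 ≠ Fin.last n)
    (hMmin : ∀ M' : Finset (Fin m × Fin (n + 1)),
      IsKMatching M' (k - 1) → (∀ e ∈ M', e.2 ≠ Fin.last n) →
      ∑ e ∈ M, c e ≤ ∑ e ∈ M', c e) :
    ∃ N : Finset (Fin m × Fin (n + 1)), IsKMatching N k ∧
      (∀ N' : Finset (Fin m × Fin (n + 1)), IsKMatching N' k →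
        ∑ e ∈ N, c e ≤ ∑ e ∈ N', c e) ∧
      M.image Prod.fst ⊆ N.image Prod.fst ∧
      (N.image Prod.fst \ M.image Prod.fst).card = 1 :=
  matching_nesting_general m n k hk hkm hkn c M hM hMavoid hMmin
end

section
/- The cubic polynomial P(t) = 162 − 90t + 16t² − t³ has exactly one real root ρ₁ and a pair of complex conjugate roots ρ₂, ρ̄₂, and all three roots have modulus strictly greater than 3. Consequently, the moment generating function F_{3,3,3}(t) = 6(162 - 90t + 16t² - t³)/((4-t)(3-t)⁵) has no zero in the closed disk |t| ≤ 3. -/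
open ComplexConjugate

/-!
The cubic changes sign on `[3, 4]`, so it has a real root `r ∈ (3, 4)`. Dividing out `t - r`
leaves `t² + (r - 16) t + (r² - 16 r + 90)`, whose discriminant `-(3r² - 32r + 104)` is negative
for every real `r`; its roots are therefore a conjugate pair `z, conj z` with
`‖z‖² = r² - 16 r + 90 = (r - 8)² + 26 > 9`. So all three roots of `P` lie outside the closed disk
of radius 3, and on that disk the denominator of `F` vanishes only at `t = 3`.
-/

theorem exists_quadratic_eq_mul_conj_of_discrim_neg {p q : ℝ} (h : p ^ 2 < 4 * q) :
    ∃ z : ℂ, z.im ≠ 0 ∧ ‖z‖ ^ 2 = q ∧ ∀ t : ℂ, t ^ 2 + p * t + q = (t - z) * (t - conj z) := by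
  have hd : 0 < q - p ^ 2 / 4 := by linarith
  refine ⟨⟨-p / 2, √(q - p ^ 2 / 4)⟩, (Real.sqrt_pos.2 hd).ne', ?_, fun t => ?_⟩
  · rw [Complex.sq_norm, Complex.normSq_mk, Real.mul_self_sqrt hd.le]
    ring
  · have hsum := Complex.add_conj ⟨-p / 2, √(q - p ^ 2 / 4)⟩
    have hprod := Complex.mul_conj ⟨-p / 2, √(q - p ^ 2 / 4)⟩
    rw [Complex.normSq_mk, Real.mul_self_sqrt hd.le] at hprod
    push_cast at hsum hprod
    linear_combination t * hsum - hprod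

theorem exists_root_cubic_mem_Ioo :
    ∃ r ∈ Set.Ioo (3 : ℝ) 4, 162 - 90 * r + 16 * r ^ 2 - r ^ 3 = 0 := by
  have hcont : ContinuousOn (fun x : ℝ => 162 - 90 * x + 16 * x ^ 2 - x ^ 3) (Set.Icc 3 4) := by
    fun_prop
  exact intermediate_value_Ioo' (by norm_num) hcont ⟨by norm_num, by norm_num⟩

/-- The cubic `162 − 90t + 16t² − t³` has exactly one real root `ρ₁` and a conjugate pair
of non-real roots `ρ₂, conj ρ₂`, all of modulus `> 3`; consequently the moment generating
function `F_{3,3,3}(t) = 6(162 - 90t + 16t² - t³)/((4-t)(3-t)⁵)` has no zero in the closed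
disk `|t| ≤ 3`. -/
theorem F333_no_zero_in_disk
    (P F : ℂ → ℂ)
    (hP : P = fun t => 162 - 90 * t + 16 * t ^ 2 - t ^ 3)
    (hF : F = fun t => 6 * P t / ((4 - t) * (3 - t) ^ 5)) :
    (∃ ρ₁ : ℝ, P ρ₁ = 0 ∧ (∀ x : ℝ, P x = 0 → x = ρ₁) ∧ 3 < |ρ₁| ∧
      ∃ ρ₂ : ℂ, ρ₂.im ≠ 0 ∧ 3 < ‖ρ₂‖ ∧
        ∀ t : ℂ, P t = -((t - ρ₁) * (t - ρ₂) * (t - starRingEnd ℂ ρ₂))) ∧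
    ∀ t : ℂ, ‖t‖ ≤ 3 → t ≠ 3 → F t ≠ 0 := by
  obtain ⟨r, ⟨hr3, -⟩, hr⟩ := exists_root_cubic_mem_Ioo
  obtain ⟨z, hz_im, hz_normSq, hz_quad⟩ :=
    exists_quadratic_eq_mul_conj_of_discrim_neg (p := r - 16) (q := r ^ 2 - 16 * r + 90)
      (by nlinarith [sq_nonneg (3 * r - 16)])
  have hfactor : ∀ t : ℂ, P t = -((t - r) * (t - z) * (t - conj z)) := by
    intro t
    have hrC : (162 - 90 * r + 16 * r ^ 2 - r ^ 3 : ℂ) = 0 := by exact_mod_cast hr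
    rw [hP, mul_assoc, ← hz_quad]
    push_cast
    linear_combination hrC
  have hr_norm : 3 < ‖(r : ℂ)‖ := by rwa [Complex.norm_real, Real.norm_of_nonneg (by linarith)]
  have hz_norm : 3 < ‖z‖ := by nlinarith [norm_nonneg z, sq_nonneg (r - 8)]
  have hP_ne : ∀ t : ℂ, ‖t‖ ≤ 3 → P t ≠ 0 := fun t ht => by
    have hsub : ∀ w : ℂ, 3 < ‖w‖ → t - w ≠ 0 := fun w hw =>
      sub_ne_zero.2 (ne_of_apply_ne norm (by linarith))
    rw [hfactor]
    exact neg_ne_zero.2 <| mul_ne_zero (mul_ne_zero (hsub _ hr_norm) (hsub _ hz_norm))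
      (hsub _ (by rwa [Complex.norm_conj]))
  refine ⟨⟨r, by simp [hfactor], fun x hx => ?_, ?_, z, hz_im, hz_norm, hfactor⟩, ?_⟩
  · have hx_ne : ∀ w : ℂ, w.im ≠ 0 → (x : ℂ) - w ≠ 0 := fun w hw =>
      sub_ne_zero.2 (ne_of_apply_ne Complex.im fun h => hw (by simpa using h.symm))
    rw [hfactor, neg_eq_zero] at hx
    have := (mul_eq_zero.1 ((mul_eq_zero.1 hx).resolve_right
      (hx_ne _ (by simpa using hz_im)))).resolve_right (hx_ne _ hz_im)
    exact_mod_cast sub_eq_zero.1 this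
  · rwa [abs_of_pos (by linarith)]
  · intro t ht ht3
    have h4 : (4 : ℂ) - t ≠ 0 := sub_ne_zero.2 (ne_of_apply_ne norm (by norm_num; linarith))
    rw [hF]
    exact div_ne_zero (mul_ne_zero (by norm_num) (hP_ne t ht))
      (mul_ne_zero h4 (pow_ne_zero _ (sub_ne_zero.2 (Ne.symm ht3))))
end

section
/- For every p ≥ 1, the p-th cumulant of the minimum cost C_{3,3,3} of a 3×3 bipartite perfect matching equals κ_p = (p-1)!·(5/3^p + 1/4^p − ρ₁^{-p} − ρ₂^{-p} − ρ₃^{-p}), where ρ₁, ρ₂, ρ₃ are the three complex roots of 162 − 90t + 16t² − t³. Moreover, since all |ρ_i| > 3, one has κ_p ~ 5(p-1)!/3^p as p → ∞. -/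
/-!
The moment generating function factors as `F t = 6 ∏ᵢ (aᵢ - t) ^ mᵢ` with zeros at the roots `ρᵢ`
of the cubic and poles of orders 5 and 1 at 3 and 4. Hence the derivative of its logarithm
`L` is `-∑ᵢ mᵢ / (aᵢ - t)`, whose `n`-th derivative at `0` is `-n! ∑ᵢ mᵢ / aᵢ ^ (n + 1)`. The roots
lie outside the closed disc of radius 3, so the pole at 3 is the singularity closest to the
origin and dominates the cumulants.
-/

open Filter Topology
open scoped Nat

section
variable {𝕜 : Type*} [NontriviallyNormedField 𝕜]

lemma iteratedDeriv_const_sub_inv (n : ℕ) (a t : 𝕜) :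
    iteratedDeriv n (fun z => (a - z)⁻¹) t = n ! * (a - t) ^ (-1 - n : ℤ) := by
  simp only [iteratedDeriv_comp_const_sub n Inv.inv a, iteratedDeriv_eq_iterate, iter_deriv_inv,
    smul_eq_mul]
  rw [← mul_assoc, ← mul_assoc, ← mul_pow, neg_one_mul, neg_neg, one_pow, one_mul]

lemma logDeriv_const_mul_prod_sub_zpow {ι : Type*} (s : Finset ι) {c : 𝕜} (hc : c ≠ 0)
    (a : ι → 𝕜) (m : ι → ℤ) {t : 𝕜} (ht : ∀ i ∈ s, t ≠ a i) :
    logDeriv (fun z => c * ∏ i ∈ s, (a i - z) ^ m i) t = -∑ i ∈ s, m i * (a i - t)⁻¹ := by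
  have hne : ∀ i ∈ s, a i - t ≠ 0 := fun i hi => sub_ne_zero.mpr (ht i hi).symm
  rw [logDeriv_const_mul t c hc, logDeriv_prod (f := fun i z => (a i - z) ^ m i)
    (fun i hi => zpow_ne_zero _ (hne i hi))
    (fun i hi => by fun_prop (disch := exact .inl (hne i hi))),
    ← Finset.sum_neg_distrib]
  refine Finset.sum_congr rfl fun i _ => ?_
  rw [logDeriv_fun_zpow (by fun_prop), logDeriv_apply, deriv_const_sub, deriv_id'']
  ring

end

lemma deriv_eventuallyEq_logDeriv_of_exp_eventuallyEq {L F : ℂ → ℂ} {z : ℂ}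
    (hL : AnalyticAt ℂ L z) (hF : ∀ᶠ t in 𝓝 z, Complex.exp (L t) = F t) :
    deriv L =ᶠ[𝓝 z] logDeriv F := by
  filter_upwards [hL.eventually_analyticAt, logDeriv_congr_nhds hF] with t hLt hFt
  rw [← hFt, ← Function.comp_def,
    logDeriv_comp Complex.differentiableAt_exp hLt.differentiableAt, Complex.logDeriv_exp,
    Pi.one_apply, one_mul]

theorem iteratedDeriv_succ_of_exp_eq_const_mul_prod_sub_zpow {ι : Type*} (s : Finset ι)
    (c : ℂ) (a : ι → ℂ) (ha : ∀ i ∈ s, a i ≠ 0) (m : ι → ℤ) {L : ℂ → ℂ}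
    (hL : AnalyticAt ℂ L 0) (hexp : ∀ᶠ t in 𝓝 0, Complex.exp (L t) = c * ∏ i ∈ s, (a i - t) ^ m i)
    (n : ℕ) :
    iteratedDeriv (n + 1) L 0 = -n ! * ∑ i ∈ s, m i * (a i ^ (n + 1))⁻¹ := by
  have hc : c ≠ 0 := left_ne_zero_of_mul (hexp.self_of_nhds ▸ Complex.exp_ne_zero (L 0))
  have hpoles : ∀ᶠ t in 𝓝 (0 : ℂ), ∀ i ∈ s, t ≠ a i :=
    (s.eventually_all).2 fun i hi => eventually_ne_nhds (ha i hi).symm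
  have hderiv : deriv L =ᶠ[𝓝 0] fun t => -∑ i ∈ s, m i * (a i - t)⁻¹ :=
    (deriv_eventuallyEq_logDeriv_of_exp_eventuallyEq hL hexp).trans
      (hpoles.mono fun t ht => logDeriv_const_mul_prod_sub_zpow s hc a m ht)
  rw [iteratedDeriv_succ', hderiv.iteratedDeriv_eq, iteratedDeriv_fun_neg,
    iteratedDeriv_fun_sum fun i hi => by fun_prop (disch := simpa using ha i hi),
    Finset.mul_sum, ← Finset.sum_neg_distrib]
  refine Finset.sum_congr rfl fun i _ => ?_
  rw [iteratedDeriv_const_mul_field, iteratedDeriv_const_sub_inv, sub_zero,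
    show (-1 - n : ℤ) = -((n + 1 : ℕ) : ℤ) by push_cast; ring, zpow_neg, zpow_natCast]
  ring

lemma three_lt_norm_of_cubic_eq_zero {z : ℂ} (h : 162 - 90 * z + 16 * z ^ 2 - z ^ 3 = 0) :
    3 < ‖z‖ := by
  by_contra! hz
  have hdisk : z.re ^ 2 + z.im ^ 2 ≤ 9 := by
    have : ‖z‖ ^ 2 ≤ 3 ^ 2 := pow_le_pow_left₀ (norm_nonneg z) hz 2
    rw [Complex.sq_norm, Complex.normSq_apply] at this
    nlinarith
  obtain ⟨hre, him⟩ := Complex.ext_iff.mp h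
  simp only [pow_succ, pow_zero, one_mul, Complex.sub_re, Complex.add_re, Complex.mul_re,
    Complex.sub_im, Complex.add_im, Complex.mul_im, Complex.re_ofNat, Complex.im_ofNat,
    Complex.zero_re, Complex.zero_im] at hre him
  set x := z.re
  set y := z.im
  rcases eq_or_ne y 0 with hy | hy
  · -- the real cubic is decreasing (its derivative has negative discriminant) and positive at 3
    rw [hy] at hre hdisk
    nlinarith [sq_nonneg (x - 3), sq_nonneg x, sq_nonneg (x + 3)]
  · have hconic : 3 * x ^ 2 - y ^ 2 - 32 * x + 90 = 0 :=
      (mul_eq_zero.mp (by linear_combination -him : y * (3 * x ^ 2 - y ^ 2 - 32 * x + 90) = 0))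
        |>.resolve_left hy
    -- with `x ^ 2 + y ^ 2 ≤ 9` this forces `4 * (x - 4) ^ 2 + 17 ≤ 0`
    nlinarith [sq_nonneg (2 * x - 8)]

lemma tendsto_pow_div_pow_of_norm_lt {a b : ℂ} (h : ‖a‖ < ‖b‖) :
    Tendsto (fun p : ℕ => a ^ p / b ^ p) atTop (𝓝 0) := by
  simp_rw [← div_pow]
  exact tendsto_pow_atTop_nhds_zero_of_norm_lt_one
    (by rw [norm_div]; exact (div_lt_one ((norm_nonneg a).trans_lt h)).mpr h)

lemma tendsto_cumulant_ratio_C333 {ι : Type*} [Fintype ι] (ρ : ι → ℂ) (hρ : ∀ i, 3 < ‖ρ i‖) :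
    Tendsto (fun p : ℕ => (5 / 3 ^ p + 1 / 4 ^ p - ∑ i, ρ i ^ (-(p : ℤ))) / (5 / 3 ^ p))
      atTop (𝓝 1) := by
  have hlim : Tendsto (fun p : ℕ => 1 + (3 ^ p / 4 ^ p) / 5 - (∑ i, 3 ^ p / ρ i ^ p) / 5)
      atTop (𝓝 (1 + 0 / 5 - (∑ _ : ι, 0) / 5)) :=
    ((tendsto_pow_div_pow_of_norm_lt (by norm_num)).div_const _ |>.const_add _).sub
      ((tendsto_finsetSum _ fun i _ =>
        tendsto_pow_div_pow_of_norm_lt (by simpa using hρ i)).div_const _)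
  refine (by simpa using hlim : Tendsto _ _ _).congr fun p => ?_
  have hρ0 : ∀ i, ρ i ≠ 0 := fun i => norm_pos_iff.mp (by linarith [hρ i])
  simp only [zpow_neg, zpow_natCast, Finset.sum_div]
  field_simp
  rw [Finset.mul_sum, Finset.mul_sum]
  congr 1
  refine Finset.sum_congr rfl fun i _ => ?_
  field_simp [hρ0 i]

theorem cumulants_of_C333_general
    (F : ℂ → ℂ)
    (hF : F = fun t => 6 * (162 - 90 * t + 16 * t ^ 2 - t ^ 3) / ((4 - t) * (3 - t) ^ 5))
    (ρ : Fin 3 → ℂ)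
    (hρ : ∀ t : ℂ, 162 - 90 * t + 16 * t ^ 2 - t ^ 3 = -∏ i, (t - ρ i))
    (L : ℂ → ℂ) (hLa : AnalyticAt ℂ L 0)
    (hFL : ∀ᶠ t in nhds (0 : ℂ), Complex.exp (L t) = F t)
    (κ : ℕ → ℂ) (hκ : ∀ p, κ p = iteratedDeriv p L 0) :
    (∀ i, 3 < ‖ρ i‖) ∧
    (∀ p : ℕ, 1 ≤ p → κ p = (Nat.factorial (p - 1) : ℂ) *
      (5 / 3 ^ p + 1 / 4 ^ p - ∑ i, (ρ i) ^ (-(p : ℤ)))) ∧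
    Tendsto (fun p : ℕ => κ p / (5 * (Nat.factorial (p - 1) : ℂ) / 3 ^ p))
      atTop (nhds 1) := by
  have hρ3 : ∀ i, 3 < ‖ρ i‖ := fun i => three_lt_norm_of_cubic_eq_zero <| by
    rw [hρ, Finset.prod_eq_zero (Finset.mem_univ i) (sub_self _), neg_zero]
  have hρ0 : ∀ i, ρ i ≠ 0 := fun i => norm_pos_iff.mp (by linarith [hρ3 i])
  have hF_factor : ∀ t, F t =
      6 * ∏ i, (![ρ 0, ρ 1, ρ 2, 3, 4] i - t) ^ (![1, 1, 1, -5, -1] i : ℤ) := fun t => by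
    simp only [hF, hρ, Fin.prod_univ_five, Fin.prod_univ_three, Matrix.cons_val, zpow_neg,
      div_eq_mul_inv, mul_inv_rev, zpow_ofNat]
    ring
  have hκ_formula : ∀ p : ℕ, 1 ≤ p → κ p = (p - 1)! *
      (5 / 3 ^ p + 1 / 4 ^ p - ∑ i, (ρ i) ^ (-(p : ℤ))) := by
    intro p hp
    obtain ⟨n, rfl⟩ := Nat.exists_eq_add_of_le' hp
    rw [hκ, iteratedDeriv_succ_of_exp_eq_const_mul_prod_sub_zpow Finset.univ 6 _
      (by simp [Fin.forall_fin_succ, hρ0]) _ hLa (hFL.mono fun t ht => ht.trans (hF_factor t))]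
    simp only [Nat.add_sub_cancel, zpow_neg, zpow_natCast, Fin.sum_univ_five, Fin.sum_univ_three,
      Matrix.cons_val, Int.cast_one, Int.cast_neg, Int.cast_ofNat]
    ring
  refine ⟨hρ3, hκ_formula, (tendsto_cumulant_ratio_C333 ρ hρ3).congr' ?_⟩
  filter_upwards [eventually_ge_atTop 1] with p hp
  have hfact : ((p - 1)! : ℂ) ≠ 0 := Nat.cast_ne_zero.mpr (Nat.factorial_ne_zero _)
  rw [hκ_formula p hp]
  field_simp

/-- The cumulants of `C_{3,3,3}` are
`κ_p = (p-1)!·(5/3^p + 1/4^p − ρ₁^{-p} − ρ₂^{-p} − ρ₃^{-p})`, where `ρ₁, ρ₂, ρ₃` are the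
roots of `162 − 90t + 16t² − t³`, and since all `|ρᵢ| > 3` one has
`κ_p ~ 5(p-1)!/3^p` as `p → ∞`. -/
theorem cumulants_of_C333
    (F : ℂ → ℂ)
    (hF : F = fun t => 6 * (162 - 90 * t + 16 * t ^ 2 - t ^ 3) / ((4 - t) * (3 - t) ^ 5))
    (ρ : Fin 3 → ℂ)
    (hρ : ∀ t : ℂ, 162 - 90 * t + 16 * t ^ 2 - t ^ 3 = -∏ i, (t - ρ i))
    (L : ℂ → ℂ) (hLa : AnalyticAt ℂ L 0) (hL0 : L 0 = 0)
    (hFL : ∀ᶠ t in nhds (0 : ℂ), Complex.exp (L t) = F t)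
    (κ : ℕ → ℂ) (hκ : ∀ p, κ p = iteratedDeriv p L 0) :
    (∀ i, 3 < ‖ρ i‖) ∧
    (∀ p : ℕ, 1 ≤ p → κ p = (Nat.factorial (p - 1) : ℂ) *
      (5 / 3 ^ p + 1 / 4 ^ p - ∑ i, (ρ i) ^ (-(p : ℤ)))) ∧
    Tendsto (fun p : ℕ => κ p / (5 * (Nat.factorial (p - 1) : ℂ) / 3 ^ p))
      atTop (nhds 1) :=
  cumulants_of_C333_general F hF ρ hρ L hLa hFL κ hκ
end
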